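/- arXiv:1512.03504 — 5 statements merged into one kernel-verified Lean document; each statement's English description precedes it below -/
import Mathlib

section
/- Let φ, ψ ∈ ℤ[T] with ψ monic. Then ψ divides φ in ℤ[T] if and only if the integer ψ(q) divides the integer φ(q) for infinitely many integers q. -/
open Polynomial Filter Asymptotics

/-- Auxiliary: a polynomial over ℝ with positive degree and positive leading
coefficient, whose natDegree is even, tends to +∞ along `atBot`. -/
lemma aux_tendsto_atBot (P : ℝ[X]) (hdeg : 0 < P.degree) (hlc : P.leadingCoeff = 1)
    (heven : Even P.natDegree) :
    Tendsto (fun x : ℝ => P.eval x) atBot atTop := by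
  have hX : (-X : ℝ[X]).natDegree = 1 := by
    simp
  have hQlc : (P.comp (-X)).leadingCoeff = 1 := by
    rw [Polynomial.leadingCoeff_comp (by rw [hX]; norm_num)]
    have : (-X : ℝ[X]).leadingCoeff = -1 := by
      simp
    rw [hlc, this, heven.neg_one_pow, one_mul]
  have hQdeg : 0 < (P.comp (-X)).degree := by
    have hnd : (P.comp (-X)).natDegree = P.natDegree := by
      rw [Polynomial.natDegree_comp, hX, mul_one]
    have hPnd : 0 < P.natDegree := Polynomial.natDegree_pos_iff_degree_pos.2 hdeg
    exact Polynomial.natDegree_pos_iff_degree_pos.1 (hnd ▸ hPnd)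
  have h1 : Tendsto (fun x : ℝ => (P.comp (-X)).eval x) atTop atTop :=
    Polynomial.tendsto_atTop_of_leadingCoeff_nonneg _ hQdeg (by rw [hQlc]; norm_num)
  have h2 : Tendsto (fun x : ℝ => (P.comp (-X)).eval (-x)) atBot atTop :=
    h1.comp tendsto_neg_atBot_atTop
  refine h2.congr fun x => ?_
  simp [Polynomial.eval_comp]

/-- For integer polynomials φ, ψ with ψ monic, ψ divides φ in ℤ[T]
if and only if ψ(q) divides φ(q) for infinitely many integers q. -/
theorem hall_poly_divisibility (φ ψ : Polynomial ℤ) (hψ : ψ.Monic) :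
    ψ ∣ φ ↔ {q : ℤ | ψ.eval q ∣ φ.eval q}.Infinite := by
  constructor
  · rintro ⟨c, rfl⟩
    have : {q : ℤ | ψ.eval q ∣ (ψ * c).eval q} = Set.univ := by
      ext q; simp [Polynomial.eval_mul, dvd_mul_right]
    rw [this]
    exact Set.infinite_univ
  · intro hinf
    rw [← Polynomial.modByMonic_eq_zero_iff_dvd hψ]
    by_contra hr
    set r : Polynomial ℤ := φ %ₘ ψ with hr_def
    -- for q in the set, ψ(q) ∣ r(q)
    have hdvdr : ∀ q ∈ {q : ℤ | ψ.eval q ∣ φ.eval q}, ψ.eval q ∣ r.eval q := by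
      intro q hq
      have h := Polynomial.modByMonic_add_div φ ψ
      have : r.eval q = φ.eval q - ψ.eval q * (φ /ₘ ψ).eval q := by
        have := congrArg (Polynomial.eval q) h
        simp only [Polynomial.eval_add, Polynomial.eval_mul] at this
        linarith
      rw [this]
      exact dvd_sub hq (Dvd.intro _ rfl)
    have hdeg : r.degree < ψ.degree := Polynomial.degree_modByMonic_lt φ hψ
    have hψdeg : 0 < ψ.degree := lt_of_le_of_lt (Polynomial.zero_le_degree_iff.2 hr) hdeg
    -- pass to ℝ
    set f : ℤ →+* ℝ := Int.castRingHom ℝ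
    have hfinj : Function.Injective f := Int.cast_injective
    set Ψ : ℝ[X] := ψ.map f with hΨ
    set R : ℝ[X] := r.map f with hR
    have hΨm : Ψ.Monic := hψ.map f
    have hΨdeg : Ψ.degree = ψ.degree := Polynomial.degree_map_eq_of_injective hfinj ψ
    have hRdeg : R.degree = r.degree := Polynomial.degree_map_eq_of_injective hfinj r
    set P : ℝ[X] := Ψ * Ψ - R * R with hP
    have hdegRR : (R * R).degree < (Ψ * Ψ).degree := by
      rw [Polynomial.degree_mul, Polynomial.degree_mul, hΨdeg, hRdeg]
      have h0 : (0 : WithBot ℕ) ≤ r.degree := Polynomial.zero_le_degree_iff.2 hr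
      have hψne : ψ.degree ≠ ⊥ := by
        intro h; rw [h] at hψdeg; exact absurd hψdeg (by simp)
      calc r.degree + r.degree < ψ.degree + r.degree := by
            exact WithBot.add_lt_add_right (by intro h; rw [h] at h0; simp at h0) hdeg
        _ < ψ.degree + ψ.degree := WithBot.add_lt_add_left hψne hdeg
    have hPdeg : P.degree = (Ψ * Ψ).degree := by
      rw [hP, sub_eq_add_neg, add_comm]
      rw [Polynomial.degree_add_eq_right_of_degree_lt (by rwa [Polynomial.degree_neg])]
    have hPlc : P.leadingCoeff = 1 := by
      rw [hP, sub_eq_add_neg, add_comm]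
      rw [Polynomial.leadingCoeff_add_of_degree_lt (by rwa [Polynomial.degree_neg])]
      exact hΨm.mul hΨm
    have hPdegpos : 0 < P.degree := by
      rw [hPdeg, Polynomial.degree_mul, hΨdeg]
      calc (0 : WithBot ℕ) < ψ.degree := hψdeg
        _ ≤ ψ.degree + ψ.degree := le_add_of_nonneg_right hψdeg.le
    have hPne : P ≠ 0 := fun h => by rw [h] at hPdegpos; simp at hPdegpos
    have hPeven : Even P.natDegree := by
      have : P.natDegree = (Ψ * Ψ).natDegree :=
        Polynomial.natDegree_eq_of_degree_eq hPdeg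
      rw [this, Polynomial.natDegree_mul hΨm.ne_zero hΨm.ne_zero]
      exact ⟨Ψ.natDegree, rfl⟩
    -- tendsto along cofinite on ℤ
    have htop : Tendsto (fun x : ℝ => P.eval x) atTop atTop :=
      Polynomial.tendsto_atTop_of_leadingCoeff_nonneg _ hPdegpos (by rw [hPlc]; norm_num)
    have hbot : Tendsto (fun x : ℝ => P.eval x) atBot atTop :=
      aux_tendsto_atBot P hPdegpos hPlc hPeven
    have hcof : Tendsto (fun q : ℤ => P.eval (q : ℝ)) cofinite atTop := by
      rw [Int.cofinite_eq, tendsto_sup]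
      constructor
      · exact hbot.comp (tendsto_intCast_atBot_iff.mpr tendsto_id)
      · exact htop.comp tendsto_intCast_atTop_atTop
    have hev : ∀ᶠ q : ℤ in cofinite, 0 < P.eval (q : ℝ) :=
      hcof.eventually_gt_atTop 0
    have hfin : {q : ℤ | ¬ 0 < P.eval (q : ℝ)}.Finite :=
      Filter.eventually_cofinite.mp hev
    -- infinitely many roots of r
    have hroots : {q : ℤ | r.IsRoot q}.Infinite := by
      have hsub : ({q : ℤ | ψ.eval q ∣ φ.eval q} \ {q : ℤ | ¬ 0 < P.eval (q : ℝ)})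
          ⊆ {q : ℤ | r.IsRoot q} := by
        intro q hq
        have hdvd : ψ.eval q ∣ r.eval q := hdvdr q hq.1
        have hpos : 0 < P.eval (q : ℝ) := not_not.1 hq.2
        have heval : P.eval (q : ℝ) =
            ((ψ.eval q : ℤ) : ℝ) * ((ψ.eval q : ℤ) : ℝ)
              - ((r.eval q : ℤ) : ℝ) * ((r.eval q : ℤ) : ℝ) := by
          simp [hP, hΨ, hR, Polynomial.eval_intCast_map, f]
        rw [heval, sub_pos] at hpos
        have hlt : (r.eval q) * (r.eval q) < (ψ.eval q) * (ψ.eval q) := by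
          exact_mod_cast hpos
        by_contra hne
        have hrq : r.eval q ≠ 0 := hne
        have h1 : |ψ.eval q| ≤ |r.eval q| :=
          Int.le_of_dvd (abs_pos.2 hrq) ((abs_dvd _ _).2 (dvd_abs _ _ |>.2 hdvd))
        have h2 : |r.eval q| * |r.eval q| < |ψ.eval q| * |ψ.eval q| := by
          rw [← abs_mul, ← abs_mul, abs_mul_self, abs_mul_self]; exact hlt
        nlinarith [abs_nonneg (r.eval q), abs_nonneg (ψ.eval q)]
      exact ((hinf.diff hfin).mono hsub)
    exact hroots (Polynomial.finite_setOf_isRoot hr)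
end

section
/- Let φ, ψ ∈ ℤ[T] with ψ monic, and suppose ψ(q) divides φ(q) for infinitely many integers q. Then the quotient φ/ψ, obtained by polynomial division, lies in ℤ[T]. -/
open Polynomial Filter Set

private lemma aux_abs_lt_atTop (P Q : Polynomial ℝ) (hdeg : P.degree < Q.degree)
    (hQ : 0 < Q.degree) : ∀ᶠ x in atTop, |P.eval x| < |Q.eval x| := by
  have h1 := Polynomial.div_tendsto_zero_of_degree_lt P Q hdeg
  have h2 : ∀ᶠ x in atTop, (1 : ℝ) ≤ |Q.eval x| :=
    (Polynomial.abs_tendsto_atTop Q hQ).eventually_ge_atTop 1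
  have h3 : ∀ᶠ x in atTop, |P.eval x / Q.eval x| < 1 := by
    have := h1.abs
    rw [abs_zero] at this
    exact this.eventually (gt_mem_nhds one_pos)
  filter_upwards [h2, h3] with x h2 h3
  have hQpos : (0 : ℝ) < |Q.eval x| := lt_of_lt_of_le one_pos h2
  rw [abs_div, div_lt_one hQpos] at h3
  calc |P.eval x| < 1 * |Q.eval x| := by linarith
    _ ≤ |Q.eval x| := by linarith

private lemma aux_abs_lt_cofinite (r q : Polynomial ℤ) (hdeg : r.degree < q.degree)
    (hq : 0 < q.degree) : ∀ᶠ x in (cofinite : Filter ℤ), |r.eval x| < |q.eval x| := by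
  set f : ℤ →+* ℝ := Int.castRingHom ℝ
  have hinj : Function.Injective f := Int.cast_injective
  have hdR : ∀ p : Polynomial ℤ, (p.map f).degree = p.degree := fun p =>
    degree_map_eq_of_injective hinj p
  -- atTop part
  have htop : ∀ᶠ x in (atTop : Filter ℤ), |r.eval x| < |q.eval x| := by
    have H := aux_abs_lt_atTop (r.map f) (q.map f)
      (by rw [hdR, hdR]; exact hdeg) (by rw [hdR]; exact hq)
    have hcast : Tendsto (fun n : ℤ => (n : ℝ)) atTop atTop := tendsto_intCast_atTop_atTop
    filter_upwards [hcast.eventually H] with x hx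
    rw [eval_intCast_map, eval_intCast_map] at hx
    simp only [eq_intCast] at hx
    have := hx
    rw [← Int.cast_abs, ← Int.cast_abs, Int.cast_lt] at this
    exact this
  -- atBot part, via composition with -X
  have hbot : ∀ᶠ x in (atBot : Filter ℤ), |r.eval x| < |q.eval x| := by
    have hc2 : ∀ p : Polynomial ℝ, (p.comp (-X)).degree = p.degree := by
      intro p
      rcases eq_or_ne p 0 with rfl | hp
      · simp
      · have hcc : (p.comp (-X)).comp (-X) = p := by
          rw [comp_assoc]; simp
        have hne : p.comp (-X) ≠ 0 := by
          intro h0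
          rw [← hcc, h0, zero_comp] at hp
          exact hp rfl
        rw [degree_eq_natDegree hp, degree_eq_natDegree hne, natDegree_comp]
        simp
    have H := aux_abs_lt_atTop ((r.map f).comp (-X)) ((q.map f).comp (-X))
      (by rw [hc2, hc2, hdR, hdR]; exact hdeg) (by rw [hc2, hdR]; exact hq)
    have hneg : Tendsto (fun n : ℤ => ((-n : ℤ) : ℝ)) atBot atTop :=
      tendsto_intCast_atTop_atTop.comp tendsto_neg_atBot_atTop
    filter_upwards [hneg.eventually H] with x hx
    rw [eval_comp, eval_comp] at hx
    simp only [eval_neg, eval_X, Int.cast_neg, neg_neg] at hx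
    rw [eval_intCast_map, eval_intCast_map] at hx
    simp only [eq_intCast] at hx
    rwa [← Int.cast_abs, ← Int.cast_abs, Int.cast_lt] at hx
  rw [Int.cofinite_eq]
  exact eventually_sup.mpr ⟨hbot, htop⟩

/-- If ψ is monic and ψ(q) ∣ φ(q) for infinitely many integers q,
then polynomial division of φ by ψ has zero remainder and the quotient φ /ₘ ψ
(which lies in ℤ[T]) satisfies φ = ψ · (φ /ₘ ψ). -/
theorem hall_poly_quotient_integral (φ ψ : Polynomial ℤ) (hψ : ψ.Monic)
    (h : {q : ℤ | ψ.eval q ∣ φ.eval q}.Infinite) :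
    φ %ₘ ψ = 0 ∧ φ = ψ * (φ /ₘ ψ) := by
  have key : φ %ₘ ψ = 0 := by
    by_contra hr
    set r := φ %ₘ ψ with hrdef
    have hdeg : r.degree < ψ.degree := degree_modByMonic_lt φ hψ
    have hr0 : 0 ≤ r.degree := zero_le_degree_iff.mpr hr
    have hψ0 : 0 < ψ.degree := lt_of_le_of_lt hr0 hdeg
    have hcof := aux_abs_lt_cofinite r ψ hdeg hψ0
    have hfin : {x : ℤ | ¬ |r.eval x| < |ψ.eval x|}.Finite :=
      Filter.eventually_cofinite.mp hcof
    have hroots : {x : ℤ | r.IsRoot x}.Infinite := by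
      apply ((h.diff hfin).mono ?_)
      rintro x ⟨hx1, hx2⟩
      simp only [Set.mem_setOf_eq, not_not] at hx1 hx2
      have hdvd : ψ.eval x ∣ r.eval x := by
        have : r = φ - ψ * (φ /ₘ ψ) := by
          rw [hrdef, eq_sub_iff_add_eq, modByMonic_add_div φ ψ]
        rw [this]
        simp only [eval_sub, eval_mul]
        exact dvd_sub hx1 (Dvd.intro _ rfl)
      have : r.eval x = 0 := by
        apply Int.eq_zero_of_dvd_of_natAbs_lt_natAbs hdvd
        have := hx2
        rw [Int.abs_eq_natAbs, Int.abs_eq_natAbs] at this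
        exact_mod_cast this
      exact this
    exact hr (r.eq_zero_of_infinite_isRoot hroots)
  refine ⟨key, ?_⟩
  conv_lhs => rw [← modByMonic_add_div φ ψ]
  rw [key, zero_add]
end

section
/- In the ring of formal power series over ℚ(v) (v an indeterminate), suppose Θ(s) = exp(T(vs) − T(v⁻¹s)) where T(s) = Σ_{i≥1} (T_i/[i]_v) s^i with [i]_v = (v^i − v^{−i})/(v − v^{−1}), and suppose [T(s), O(t)] = −O(t)·log((1 − s/(vt))(1 − vs/t)) for a second series O(t). Then Θ(s)·O(t) = O(t)·Θ(s)·(1 − s/(v²t))/(1 − v²s/t). -/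
namespace ThetaAux


/-- ordered sublist of entries selected by `true` -/
def picked : List ℕ → List Bool → List ℕ
  | a :: L, true :: m => a :: picked L m
  | _ :: L, false :: m => picked L m
  | _, _ => []

/-- ordered sublist of entries selected by `false` -/
def rest : List ℕ → List Bool → List ℕ
  | _ :: L, true :: m => rest L m
  | a :: L, false :: m => a :: rest L m
  | L, [] => L
  | [], _ => []

def interleave : List Bool → List ℕ → List ℕ → List ℕ
  | true :: m, p :: P, Q => p :: interleave m P Q
  | false :: m, P, q :: Q => q :: interleave m P Q
  | _, _, _ => []

lemma picked_length : ∀ (L : List ℕ) (m : List Bool), m.length = L.length →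
    (picked L m).length = m.count true
  | [], [], _ => by simp [picked]
  | a :: L, true :: m, h => by
    simp only [picked, List.length_cons, List.count_cons]
    simp only [List.length_cons, Nat.succ.injEq] at h
    simp [picked_length L m h]
  | a :: L, false :: m, h => by
    simp only [picked, List.count_cons]
    simp only [List.length_cons, Nat.succ.injEq] at h
    simp [picked_length L m h]

lemma rest_length : ∀ (L : List ℕ) (m : List Bool), m.length = L.length →
    (rest L m).length = m.count false
  | [], [], _ => by simp [rest]
  | a :: L, true :: m, h => by
    simp only [rest, List.count_cons]
    simp only [List.length_cons, Nat.succ.injEq] at h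
    simp [rest_length L m h]
  | a :: L, false :: m, h => by
    simp only [rest, List.length_cons, List.count_cons]
    simp only [List.length_cons, Nat.succ.injEq] at h
    simp [rest_length L m h]

lemma count_true_add_count_false (m : List Bool) :
    m.count true + m.count false = m.length := by
  induction m with
  | nil => simp
  | cons b m ih => cases b <;> simp [List.count_cons] <;> omega

lemma picked_sum_add_rest_sum : ∀ (L : List ℕ) (m : List Bool),
    (picked L m).sum + (rest L m).sum = L.sum
  | [], [] => by simp [picked, rest]
  | [], _ :: _ => by simp [picked, rest]
  | a :: L, [] => by simp [picked, rest]
  | a :: L, true :: m => by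
    simp only [picked, rest, List.sum_cons]
    have := picked_sum_add_rest_sum L m
    omega
  | a :: L, false :: m => by
    simp only [picked, rest, List.sum_cons]
    have := picked_sum_add_rest_sum L m
    omega

lemma mem_picked : ∀ (L : List ℕ) (m : List Bool), ∀ x ∈ picked L m, x ∈ L
  | [], [], x => by simp [picked]
  | [], _ :: _, x => by simp [picked]
  | a :: L, [], x => by simp [picked]
  | a :: L, true :: m, x => by
    simp only [picked, List.mem_cons]
    rintro (rfl | h)
    · exact .inl rfl
    · exact .inr (mem_picked L m x h)
  | a :: L, false :: m, x => fun h => List.mem_cons_of_mem a (mem_picked L m x h)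

lemma mem_rest : ∀ (L : List ℕ) (m : List Bool), ∀ x ∈ rest L m, x ∈ L
  | [], [], x => by simp [rest]
  | [], _ :: _, x => by simp [rest]
  | a :: L, [], x => fun h => h
  | a :: L, true :: m, x => fun h => List.mem_cons_of_mem a (mem_rest L m x h)
  | a :: L, false :: m, x => by
    simp only [rest, List.mem_cons]
    rintro (rfl | h)
    · exact .inl rfl
    · exact .inr (mem_rest L m x h)

lemma interleave_picked_rest : ∀ (L : List ℕ) (m : List Bool), m.length = L.length →
    interleave m (picked L m) (rest L m) = L
  | [], [], _ => by simp [picked, rest, interleave]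
  | a :: L, true :: m, h => by
    simp only [picked, rest, interleave]
    simp only [List.length_cons, Nat.succ.injEq] at h
    rw [interleave_picked_rest L m h]
  | a :: L, false :: m, h => by
    simp only [List.length_cons, Nat.succ.injEq] at h
    have : interleave (false :: m) (picked (a :: L) (false :: m)) (rest (a :: L) (false :: m))
        = a :: interleave m (picked L m) (rest L m) := by
      simp [picked, rest, interleave]
    rw [this, interleave_picked_rest L m h]

lemma picked_interleave : ∀ (m : List Bool) (P Q : List ℕ),
    m.count true = P.length → m.count false = Q.length →
    picked (interleave m P Q) m = P
  | [], [], _, _, _ => by simp [interleave, picked]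
  | [], _ :: _, _, h, _ => by simp at h
  | true :: m, p :: P, Q, h1, h2 => by
    simp only [List.count_cons] at h1 h2
    simp only [interleave, picked]
    rw [picked_interleave m P Q (by simpa using h1) (by simpa using h2)]
  | true :: m, [], Q, h1, _ => by simp [List.count_cons] at h1
  | false :: m, P, q :: Q, h1, h2 => by
    simp only [List.count_cons] at h1 h2
    simp only [interleave, picked]
    exact picked_interleave m P (Q) (by simpa using h1) (by simpa using h2)
  | false :: m, P, [], _, h2 => by simp [List.count_cons] at h2

lemma rest_interleave : ∀ (m : List Bool) (P Q : List ℕ),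
    m.count true = P.length → m.count false = Q.length →
    rest (interleave m P Q) m = Q
  | [], _, [], _, _ => by simp [interleave, rest]
  | [], _, _ :: _, _, h => by simp at h
  | true :: m, p :: P, Q, h1, h2 => by
    simp only [List.count_cons] at h1 h2
    simp only [interleave, rest]
    exact rest_interleave m P Q (by simpa using h1) (by simpa using h2)
  | true :: m, [], Q, h1, _ => by simp [List.count_cons] at h1
  | false :: m, P, q :: Q, h1, h2 => by
    simp only [List.count_cons] at h1 h2
    simp only [interleave, rest]
    rw [rest_interleave m P Q (by simpa using h1) (by simpa using h2)]
  | false :: m, P, [], _, h2 => by simp [List.count_cons] at h2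

lemma length_interleave : ∀ (m : List Bool) (P Q : List ℕ),
    m.count true = P.length → m.count false = Q.length →
    (interleave m P Q).length = m.length
  | [], _, _, _, _ => by simp [interleave]
  | true :: m, p :: P, Q, h1, h2 => by
    simp only [List.count_cons] at h1 h2
    simp only [interleave, List.length_cons]
    rw [length_interleave m P Q (by simpa using h1) (by simpa using h2)]
  | true :: m, [], Q, h1, _ => by simp [List.count_cons] at h1
  | false :: m, P, q :: Q, h1, h2 => by
    simp only [List.count_cons] at h1 h2
    simp only [interleave, List.length_cons]
    rw [length_interleave m P Q (by simpa using h1) (by simpa using h2)]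
  | false :: m, P, [], _, h2 => by simp [List.count_cons] at h2

lemma sum_interleave : ∀ (m : List Bool) (P Q : List ℕ),
    m.count true = P.length → m.count false = Q.length →
    (interleave m P Q).sum = P.sum + Q.sum
  | [], [], [], _, _ => by simp [interleave]
  | [], _ :: _, _, h, _ => by simp at h
  | [], [], _ :: _, _, h => by simp at h
  | true :: m, p :: P, Q, h1, h2 => by
    simp only [List.count_cons] at h1 h2
    simp only [interleave, List.sum_cons]
    rw [sum_interleave m P Q (by simpa using h1) (by simpa using h2)]; omega
  | true :: m, [], Q, h1, _ => by simp [List.count_cons] at h1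
  | false :: m, P, q :: Q, h1, h2 => by
    simp only [List.count_cons] at h1 h2
    simp only [interleave, List.sum_cons]
    rw [sum_interleave m P Q (by simpa using h1) (by simpa using h2)]; omega
  | false :: m, P, [], _, h2 => by simp [List.count_cons] at h2

lemma mem_interleave : ∀ (m : List Bool) (P Q : List ℕ), ∀ x ∈ interleave m P Q,
    x ∈ P ∨ x ∈ Q
  | [], _, _, x => by simp [interleave]
  | true :: m, p :: P, Q, x => by
    simp only [interleave, List.mem_cons]
    rintro (rfl | h)
    · exact .inl (.inl rfl)
    · rcases mem_interleave m P Q x h with h | h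
      · exact .inl (.inr h)
      · exact .inr h
  | true :: m, [], Q, x => by simp [interleave]
  | false :: m, p :: P, q :: Q, x => by
    simp only [interleave, List.mem_cons]
    rintro (rfl | h)
    · exact .inr (.inl rfl)
    · rcases mem_interleave m (p :: P) Q x h with h | h
      · exact .inl (List.mem_cons.mp h)
      · exact .inr (.inr h)
  | false :: m, [], q :: Q, x => by
    simp only [interleave, List.mem_cons]
    rintro (rfl | h)
    · exact .inr (.inl rfl)
    · rcases mem_interleave m [] Q x h with h | h
      · simp at h
      · exact .inr (.inr h)
  | false :: m, P, [], x => by cases P <;> simp [interleave]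

lemma length_le_sum_of_pos : ∀ (L : List ℕ), (∀ x ∈ L, 1 ≤ x) → L.length ≤ L.sum
  | [], _ => by simp
  | a :: L, h => by
    simp only [List.length_cons, List.sum_cons]
    have h1 := h a (.head _)
    have := length_le_sum_of_pos L (fun x hx => h x (.tail _ hx))
    omega




def masksF : ℕ → Finset (List Bool)
  | 0 => {[]}
  | k + 1 => (masksF k).image (true :: ·) ∪ (masksF k).image (false :: ·)

lemma mem_masksF : ∀ {k : ℕ} {m : List Bool}, m ∈ masksF k ↔ m.length = k
  | 0, m => by
    constructor
    · intro h; simp [masksF] at h; simp [h]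
    · intro h; rw [List.length_eq_zero_iff] at h; simp [masksF, h]
  | k + 1, [] => by
    simp [masksF]
  | k + 1, b :: m => by
    simp only [masksF, Finset.mem_union, Finset.mem_image, List.length_cons,
      Nat.succ.injEq]
    constructor
    · rintro (⟨m', hm', h⟩ | ⟨m', hm', h⟩) <;>
        · cases h; exact mem_masksF.mp hm'
    · intro h
      cases b
      · exact .inr ⟨m, mem_masksF.mpr h, rfl⟩
      · exact .inl ⟨m, mem_masksF.mpr h, rfl⟩

lemma masksF_card_filter : ∀ (k r : ℕ),
    ((masksF k).filter (fun m => m.count true = r)).card = k.choose r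
  | 0, r => by
    cases r <;> simp [masksF, Finset.filter_singleton]
  | k + 1, r => by
    have hdisj : Disjoint
        (((masksF k).image (true :: ·)).filter (fun m => m.count true = r))
        (((masksF k).image (false :: ·)).filter (fun m => m.count true = r)) := by
      simp only [Finset.disjoint_left, Finset.mem_filter, Finset.mem_image]
      rintro m ⟨⟨m', _, rfl⟩, _⟩ ⟨⟨m'', _, h⟩, _⟩
      exact absurd (congrArg List.head? h) (by simp)
    have h1 : (((masksF k).image (true :: ·)).filter (fun m => m.count true = r))
        = ((masksF k).filter (fun m => m.count true + 1 = r)).image (true :: ·) := by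
      ext m
      simp only [Finset.mem_filter, Finset.mem_image]
      constructor
      · rintro ⟨⟨m', hm', rfl⟩, h⟩
        exact ⟨m', ⟨hm', by simpa [List.count_cons] using h⟩, rfl⟩
      · rintro ⟨m', ⟨hm', h⟩, rfl⟩
        exact ⟨⟨m', hm', rfl⟩, by simpa [List.count_cons] using h⟩
    have h2 : (((masksF k).image (false :: ·)).filter (fun m => m.count true = r))
        = ((masksF k).filter (fun m => m.count true = r)).image (false :: ·) := by
      ext m
      simp only [Finset.mem_filter, Finset.mem_image]
      constructor
      · rintro ⟨⟨m', hm', rfl⟩, h⟩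
        exact ⟨m', ⟨hm', by simpa [List.count_cons] using h⟩, rfl⟩
      · rintro ⟨m', ⟨hm', h⟩, rfl⟩
        exact ⟨⟨m', hm', rfl⟩, by simpa [List.count_cons] using h⟩
    have hinj1 : Function.Injective (true :: · : List Bool → List Bool) :=
      fun a b h => by simpa using h
    have hinj2 : Function.Injective (false :: · : List Bool → List Bool) :=
      fun a b h => by simpa using h
    rw [masksF, Finset.filter_union, Finset.card_union_of_disjoint hdisj, h1, h2,
      Finset.card_image_of_injective _ hinj1, Finset.card_image_of_injective _ hinj2]
    cases r with
    | zero =>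
      simp only [Nat.choose_zero_right]
      rw [show ((masksF k).filter (fun m => m.count true + 1 = 0)) = ∅ by
        apply Finset.filter_false_of_mem; intro m _; omega]
      simpa using masksF_card_filter k 0
    | succ r =>
      have e1 : ((masksF k).filter (fun m => m.count true + 1 = r + 1))
          = ((masksF k).filter (fun m => m.count true = r)) := by
        apply Finset.filter_congr; intro m _; simp
      rw [e1, masksF_card_filter k r, masksF_card_filter k (r+1),
        Nat.choose_succ_succ]

def compsLen : ℕ → ℕ → Finset (List ℕ)
  | i, 0 => if i = 0 then {[]} else ∅
  | i, k + 1 => (Finset.Icc 1 i).biUnion fun b => (compsLen (i - b) k).image (b :: ·)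

lemma mem_compsLen : ∀ {k i : ℕ} {L : List ℕ},
    L ∈ compsLen i k ↔ (∀ x ∈ L, 1 ≤ x) ∧ L.sum = i ∧ L.length = k
  | 0, i, L => by
    rcases eq_or_ne i 0 with rfl | hi
    · have : compsLen 0 0 = {[]} := by simp [compsLen]
      rw [this, Finset.mem_singleton]
      constructor
      · rintro rfl; simp
      · rintro ⟨_, _, h⟩
        rw [List.length_eq_zero_iff] at h
        exact h
    · simp only [compsLen, if_neg hi, Finset.notMem_empty, false_iff]
      rintro ⟨_, hs, h⟩
      rw [List.length_eq_zero_iff.mp h] at hs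
      exact hi (hs.symm ▸ rfl)
  | k + 1, i, L => by
    simp only [compsLen, Finset.mem_biUnion, Finset.mem_image, Finset.mem_Icc]
    constructor
    · rintro ⟨b, ⟨hb1, hbi⟩, L', hL', rfl⟩
      obtain ⟨hpos, hsum, hlen⟩ := mem_compsLen.mp hL'
      refine ⟨?_, ?_, by simp [hlen]⟩
      · intro x hx
        rcases List.mem_cons.mp hx with rfl | hx
        · exact hb1
        · exact hpos x hx
      · simp [hsum]; omega
    · rintro ⟨hpos, hsum, hlen⟩
      cases L with
      | nil => simp at hlen
      | cons a L' =>
        have ha : 1 ≤ a := hpos a (.head _)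
        have hai : a ≤ i := by simp at hsum; omega
        refine ⟨a, ⟨ha, hai⟩, L', mem_compsLen.mpr ⟨fun x hx => hpos x (.tail _ hx),
          ?_, by simpa using hlen⟩, rfl⟩
        simp at hsum; omega

def comps (i : ℕ) : Finset (List ℕ) := (Finset.range (i + 1)).biUnion (compsLen i)

lemma length_le_sum_of_pos' : ∀ (L : List ℕ), (∀ x ∈ L, 1 ≤ x) → L.length ≤ L.sum
  | [], _ => by simp
  | a :: L, h => by
    simp only [List.length_cons, List.sum_cons]
    have h1 := h a (.head _)
    have := length_le_sum_of_pos' L (fun x hx => h x (.tail _ hx))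
    omega

lemma mem_comps {i : ℕ} {L : List ℕ} :
    L ∈ comps i ↔ (∀ x ∈ L, 1 ≤ x) ∧ L.sum = i := by
  simp only [comps, Finset.mem_biUnion, Finset.mem_range, mem_compsLen]
  constructor
  · rintro ⟨k, _, h⟩; exact ⟨h.1, h.2.1⟩
  · rintro ⟨hpos, hsum⟩
    exact ⟨L.length, by have := length_le_sum_of_pos' L hpos; omega, hpos, hsum, rfl⟩




variable {K : Type*} [Field K] [CharZero K]

def g2 (c : ℕ → K) : ℕ → ℕ → K
  | i, 0 => if i = 0 then 1 else 0
  | i, k + 1 => ∑ b ∈ Finset.Icc 1 i, c b * g2 c (i - b) k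

def g (c : ℕ → K) (i : ℕ) : K :=
  ∑ k ∈ Finset.range (i + 1), ((k.factorial : K))⁻¹ * g2 c i k

lemma g2_eq_zero (c : ℕ → K) : ∀ (k i : ℕ), i < k → g2 c i k = 0
  | 0, i, h => by omega
  | k + 1, i, h => by
    rw [g2]
    apply Finset.sum_eq_zero
    intro b hb
    simp only [Finset.mem_Icc] at hb
    rw [g2_eq_zero c k (i - b) (by omega), mul_zero]

lemma g2_deriv (c : ℕ → K) : ∀ (k i : ℕ), (i : K) * g2 c i k =
    (k : K) * ∑ b ∈ Finset.Icc 1 i, (b : K) * c b * g2 c (i - b) (k - 1)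
  | 0, i => by
    rcases eq_or_ne i 0 with rfl | hi
    · simp [g2]
    · simp [g2, hi]
  | k + 1, i => by
    rw [g2, Finset.mul_sum]
    have step1 : ∀ b ∈ Finset.Icc 1 i, (i : K) * (c b * g2 c (i - b) k)
        = (b : K) * c b * g2 c (i - b) k + c b * (((i - b : ℕ) : K) * g2 c (i - b) k) := by
      intro b hb
      simp only [Finset.mem_Icc] at hb
      have : (i : K) = (b : K) + ((i - b : ℕ) : K) := by
        rw [← Nat.cast_add]; congr 1; omega
      rw [this]; ring
    rw [Finset.sum_congr rfl step1, Finset.sum_add_distrib]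
    have step2 : ∑ b ∈ Finset.Icc 1 i, c b * (((i - b : ℕ) : K) * g2 c (i - b) k)
        = (k : K) * ∑ b ∈ Finset.Icc 1 i, (b : K) * c b * g2 c (i - b) k := by
      rcases Nat.eq_zero_or_pos k with rfl | hk
      · simp only [Nat.cast_zero, zero_mul]
        apply Finset.sum_eq_zero
        intro b hb
        rw [g2_deriv c 0 (i - b)]
        simp
      · have expand : ∀ b ∈ Finset.Icc 1 i, c b * (((i - b : ℕ) : K) * g2 c (i - b) k)
            = (k : K) * ∑ b' ∈ Finset.Icc 1 (i - b),
                c b * ((b' : K) * c b' * g2 c (i - b - b') (k - 1)) := by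
          intro b hb
          rw [g2_deriv c k (i - b), Finset.mul_sum, Finset.mul_sum, Finset.mul_sum]
          exact Finset.sum_congr rfl fun b' _ => by ring
        rw [Finset.sum_congr rfl expand, ← Finset.mul_sum]
        congr 1
        -- swap the double sum
        rw [Finset.sum_sigma' (Finset.Icc 1 i)
            (fun b => Finset.Icc 1 (i - b))
            (fun b b' => c b * ((b' : K) * c b' * g2 c (i - b - b') (k - 1)))]
        -- rewrite RHS: peel g2 (i-b) k with k = (k-1)+1
        obtain ⟨k', rfl⟩ : ∃ k', k = k' + 1 := ⟨k - 1, by omega⟩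
        have peel : ∀ b ∈ Finset.Icc 1 i, (b : K) * c b * g2 c (i - b) (k' + 1)
            = ∑ b' ∈ Finset.Icc 1 (i - b),
                (b : K) * (c b * (c b' * g2 c (i - b - b') k')) := by
          intro b hb
          rw [g2, Finset.mul_sum]
          apply Finset.sum_congr rfl
          intro b' _
          ring
        rw [Finset.sum_congr rfl peel]
        rw [Finset.sum_sigma' (Finset.Icc 1 i)
            (fun b => Finset.Icc 1 (i - b))
            (fun b b' => (b : K) * (c b * (c b' * g2 c (i - b - b') k')))]
        refine Finset.sum_nbij' (fun p => ⟨p.2, p.1⟩) (fun p => ⟨p.2, p.1⟩) ?_ ?_ ?_ ?_ ?_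
        · rintro ⟨b, b'⟩ hp
          simp only [Finset.mem_sigma, Finset.mem_Icc] at hp ⊢
          omega
        · rintro ⟨b, b'⟩ hp
          simp only [Finset.mem_sigma, Finset.mem_Icc] at hp ⊢
          omega
        · rintro ⟨b, b'⟩ _; rfl
        · rintro ⟨b, b'⟩ _; rfl
        · rintro ⟨b, b'⟩ hp
          simp only [show ∀ x : ℕ, 1 + x - 1 = x from fun x => by omega,
            Nat.add_sub_cancel]
          have : i - b - b' = i - b' - b := by omega
          rw [this]
          ring
    rw [step2]
    push_cast
    ring

lemma g_zero (c : ℕ → K) : g c 0 = 1 := by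
  simp [g, g2]

lemma g_deriv (c : ℕ → K) (i : ℕ) : (i : K) * g c i =
    ∑ b ∈ Finset.Icc 1 i, ((b : K) * c b) * g c (i - b) := by
  rw [g, Finset.mul_sum]
  have e1 : ∀ k ∈ Finset.range (i + 1), (i : K) * (((k.factorial : K))⁻¹ * g2 c i k)
      = ((k.factorial : K))⁻¹ * ((k : K) *
          ∑ b ∈ Finset.Icc 1 i, (b : K) * c b * g2 c (i - b) (k - 1)) := by
    intro k _
    rw [← g2_deriv]
    ring
  rw [Finset.sum_congr rfl e1, Finset.sum_range_succ']
  simp only [Nat.factorial_zero, Nat.cast_zero, zero_mul, mul_zero, add_zero,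
    Nat.cast_one, Nat.add_sub_cancel]
  have e2' : ∀ k ∈ Finset.range i, (((k + 1).factorial : K))⁻¹ * (((k + 1 : ℕ) : K) *
      ∑ b ∈ Finset.Icc 1 i, (b : K) * c b * g2 c (i - b) k)
      = ((k.factorial : K))⁻¹ * ∑ b ∈ Finset.Icc 1 i, (b : K) * c b * g2 c (i - b) k := by
    intro k _
    rw [Nat.factorial_succ, Nat.cast_mul, mul_inv]
    have hfac : ((k.factorial : K)) ≠ 0 := by
      exact_mod_cast Nat.cast_ne_zero.mpr k.factorial_ne_zero
    have hk : ((k + 1 : ℕ) : K) ≠ 0 := Nat.cast_ne_zero.mpr (by omega)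
    have hk' : ((k : K) + 1) ≠ 0 := by push_cast at hk; exact hk
    field_simp
  rw [Finset.sum_congr rfl e2']
  simp only [Finset.mul_sum]
  rw [Finset.sum_comm]
  apply Finset.sum_congr rfl
  intro b hb
  simp only [Finset.mem_Icc] at hb
  rw [g, Finset.mul_sum]
  have hsub : Finset.range (i - b + 1) ⊆ Finset.range i := by
    apply Finset.range_subset_range.mpr; omega
  rw [← Finset.sum_subset hsub]
  · apply Finset.sum_congr rfl
    intro k _
    ring
  · intro k _ hk
    simp only [Finset.mem_range] at hk
    rw [g2_eq_zero c k (i - b) (by omega)]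
    ring

/-- target closed form -/
def ghat (v : K) (i : ℕ) : K := if i = 0 then 1 else (1 - v⁻¹ ^ 4) * v ^ (2 * i)

lemma ghat_S (v : K) (hv : v ≠ 0) : ∀ i : ℕ, 1 ≤ i →
    ∑ b ∈ Finset.Icc 1 i, (v ^ (2 * b) - v⁻¹ ^ (2 * b)) * ghat v (i - b)
      = (i : K) * ghat v i := by
  intro i hi
  induction i with
  | zero => omega
  | succ i ih =>
    rcases Nat.eq_zero_or_pos i with rfl | hipos
    · simp only [Finset.Icc_self, Finset.sum_singleton, Nat.sub_self]
      have hg0 : ghat v 0 = 1 := rfl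
      have hg1 : ghat v (0 + 1) = (1 - v⁻¹ ^ 4) * v ^ 2 := by norm_num [ghat]
      rw [hg0, hg1, mul_one]
      push_cast
      have hw : v * v⁻¹ = 1 := mul_inv_cancel₀ hv
      linear_combination (v⁻¹ ^ 2 * (v * v⁻¹ + 1)) * hw
    · rw [Finset.sum_Icc_succ_top (by omega : 1 ≤ i + 1)]
      have hg0 : ghat v 0 = 1 := rfl
      have hg1 : ghat v 1 = (1 - v⁻¹ ^ 4) * v ^ 2 := by norm_num [ghat]
      have hgi : ghat v i = (1 - v⁻¹ ^ 4) * v ^ (2 * i) := by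
        show (if i = 0 then (1:K) else _) = _
        rw [if_neg (by omega)]
      have hgi1 : ghat v (i + 1) = (1 - v⁻¹ ^ 4) * (v ^ (2 * i) * v ^ 2) := by
        show (if i + 1 = 0 then (1:K) else _) = _
        rw [if_neg (by omega), show 2 * (i + 1) = 2 * i + 2 by omega, pow_add]
      have e1 : ∀ b ∈ Finset.Icc 1 i, (v ^ (2 * b) - v⁻¹ ^ (2 * b)) * ghat v (i + 1 - b)
          = v ^ 2 * ((v ^ (2 * b) - v⁻¹ ^ (2 * b)) * ghat v (i - b))
            + (if b = i then (v ^ (2 * i) - v⁻¹ ^ (2 * i)) * ((1 - v⁻¹ ^ 4) * v ^ 2 - v ^ 2)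
               else 0) := by
        intro b hb
        simp only [Finset.mem_Icc] at hb
        rcases eq_or_ne b i with rfl | hbi
        · rw [if_pos rfl, Nat.sub_self, hg0, show b + 1 - b = 1 by omega, hg1]
          ring
        · have hblt : b < i := by omega
          rw [if_neg hbi, add_zero]
          have h1 : ghat v (i + 1 - b) = (1 - v⁻¹ ^ 4) * v ^ (2 * (i - b)) * v ^ 2 := by
            show (if i + 1 - b = 0 then (1:K) else _) = _
            rw [if_neg (by omega), show 2 * (i + 1 - b) = 2 * (i - b) + 2 by omega, pow_add]
            ring
          have h2 : ghat v (i - b) = (1 - v⁻¹ ^ 4) * v ^ (2 * (i - b)) := by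
            show (if i - b = 0 then (1:K) else _) = _
            rw [if_neg (by omega)]
          rw [h1, h2]
          ring
      rw [Finset.sum_congr rfl e1, Finset.sum_add_distrib, ← Finset.mul_sum,
        Finset.sum_ite_eq' (Finset.Icc 1 i) i, if_pos (by simp [Finset.mem_Icc]; omega),
        ih (by omega), Nat.sub_self, hg0, hgi, hgi1,
        show 2 * (i + 1) = 2 * i + 2 by omega, pow_add, mul_one]
      push_cast
      have hw : v * v⁻¹ = 1 := mul_inv_cancel₀ hv
      linear_combination (v⁻¹ ^ (2 * i) * v⁻¹ ^ 2 * (v * v⁻¹ + 1)) * hw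

lemma g_eq_ghat (v : K) (hv : v ≠ 0)
    (c : ℕ → K) (hc : ∀ b : ℕ, 1 ≤ b → (b : K) * c b = v ^ (2 * b) - v⁻¹ ^ (2 * b)) :
    ∀ i, g c i = ghat v i := by
  intro i
  induction i using Nat.strong_induction_on with
  | _ i ih =>
    rcases Nat.eq_zero_or_pos i with rfl | hi
    · simp [g_zero, ghat]
    · have hiK : (i : K) ≠ 0 := Nat.cast_ne_zero.mpr (by omega)
      have := g_deriv c i
      have e : ∀ b ∈ Finset.Icc 1 i, ((b : K) * c b) * g c (i - b)
          = (v ^ (2 * b) - v⁻¹ ^ (2 * b)) * ghat v (i - b) := by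
        intro b hb
        simp only [Finset.mem_Icc] at hb
        rw [hc b hb.1, ih (i - b) (by omega)]
      rw [Finset.sum_congr rfl e, ghat_S v hv i hi] at this
      exact mul_left_cancel₀ hiK this



section LinkSums
variable {K : Type*} [Field K] [CharZero K]

lemma g2_eq_sum (c : ℕ → K) : ∀ (k i : ℕ),
    g2 c i k = ∑ L ∈ compsLen i k, (L.map c).prod
  | 0, i => by
    rcases eq_or_ne i 0 with rfl | hi
    · have : compsLen 0 0 = {[]} := by simp [compsLen]
      simp [g2, this]
    · have : compsLen i 0 = ∅ := by simp [compsLen, hi]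
      simp [g2, this, hi]
  | k + 1, i => by
    rw [g2]
    have hdisj : (↑(Finset.Icc 1 i) : Set ℕ).PairwiseDisjoint
        (fun b => (compsLen (i - b) k).image (b :: ·)) := by
      intro b1 _ b2 _ hne
      simp only [Finset.disjoint_left, Finset.mem_image]
      rintro L ⟨L1, _, rfl⟩ ⟨L2, _, h⟩
      exact hne (by injection h with h1 _; exact h1.symm)
    rw [show compsLen i (k+1)
        = (Finset.Icc 1 i).biUnion (fun b => (compsLen (i - b) k).image (b :: ·)) from rfl,
      Finset.sum_biUnion hdisj]
    apply Finset.sum_congr rfl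
    intro b _
    rw [Finset.sum_image (by intro y _ y' _ h; injection h),
      g2_eq_sum c k (i - b), Finset.mul_sum]
    apply Finset.sum_congr rfl
    intro L _
    simp

lemma g_eq_sum (c : ℕ → K) (i : ℕ) :
    g c i = ∑ L ∈ comps i, ((L.length.factorial : K))⁻¹ * (L.map c).prod := by
  rw [g, comps]
  have hdisj : (↑(Finset.range (i + 1)) : Set ℕ).PairwiseDisjoint (compsLen i) := by
    intro k1 _ k2 _ hne
    simp only [Finset.disjoint_left]
    intro L h1 h2
    rw [mem_compsLen] at h1 h2
    exact hne (h1.2.2 ▸ h2.2.2)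
  rw [Finset.sum_biUnion hdisj]
  apply Finset.sum_congr rfl
  intro k _
  rw [g2_eq_sum, Finset.mul_sum]
  apply Finset.sum_congr rfl
  intro L hL
  rw [(mem_compsLen.mp hL).2.2]

end LinkSums

section Alg
variable {K : Type*} [Field K] [CharZero K]
variable {A : Type*} [Ring A] [Algebra K A]

/-- ordered product -/
def W (x : ℕ → A) (L : List ℕ) : A := (L.map x).prod

lemma W_nil (x : ℕ → A) : W x [] = 1 := rfl

lemma W_cons (x : ℕ → A) (a : ℕ) (L : List ℕ) : W x (a :: L) = x a * W x L := by
  simp [W]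

lemma W_mul_O (x : ℕ → A) (O : ℤ → A) (c : ℕ → K)
    (hx : ∀ n : ℕ, 1 ≤ n → ∀ j : ℤ, x n * O j = O j * x n + c n • O (j + n)) :
    ∀ (L : List ℕ), (∀ b ∈ L, 1 ≤ b) → ∀ j : ℤ,
    W x L * O j = ∑ m ∈ masksF L.length,
      ((picked L m).map c).prod • (O (j + ((picked L m).sum : ℤ)) * W x (rest L m)) := by
  intro L
  induction L with
  | nil =>
    intro _ j
    have : masksF 0 = {[]} := rfl
    simp [this, W_nil, picked, rest]
  | cons a L ih =>
    intro hpos j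
    have ha : 1 ≤ a := hpos a (.head _)
    have hL : ∀ b ∈ L, 1 ≤ b := fun b hb => hpos b (.tail _ hb)
    rw [W_cons, mul_assoc, ih hL j, Finset.mul_sum]
    have step : ∀ m ∈ masksF L.length,
        x a * (((picked L m).map c).prod
            • (O (j + ((picked L m).sum : ℤ)) * W x (rest L m)))
        = ((picked L m).map c).prod
            • (O (j + ((picked L m).sum : ℤ)) * W x (a :: rest L m))
          + (c a * ((picked L m).map c).prod)
            • (O (j + ((a + (picked L m).sum : ℕ) : ℤ)) * W x (rest L m)) := by
      intro m _
      rw [mul_smul_comm, ← mul_assoc, hx a ha, add_mul, mul_assoc, ← W_cons,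
        smul_mul_assoc, smul_add, smul_smul, mul_comm (((picked L m).map c).prod) (c a)]
      congr 3
      push_cast
      try ring
    rw [Finset.sum_congr rfl step, Finset.sum_add_distrib]
    -- now the RHS over masksF (L.length+1)
    have hmask : masksF (a :: L).length
        = (masksF L.length).image (true :: ·) ∪ (masksF L.length).image (false :: ·) := rfl
    rw [hmask, Finset.sum_union, Finset.sum_image (by intro y _ y' _ h; injection h),
      Finset.sum_image (by intro y _ y' _ h; injection h)]
    · rw [add_comm]
      congr 1
      all_goals
        try (apply Finset.sum_congr rfl
             intro m _
             simp only [picked, rest, List.map_cons, List.prod_cons, List.sum_cons])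
    · -- disjointness
      simp only [Finset.disjoint_left, Finset.mem_image]
      rintro m ⟨m', _, rfl⟩ ⟨m'', _, h⟩
      exact absurd (congrArg List.head? h) (by simp)

end Alg

section Grand
variable {K : Type*} [Field K] [CharZero K]
variable {A : Type*} [Ring A] [Algebra K A]

def maskSet (r q : ℕ) : Finset (List Bool) :=
  (masksF (r + q)).filter (fun m => m.count true = r)

lemma card_maskSet (r q : ℕ) : (maskSet r q).card = (r + q).choose r :=
  masksF_card_filter (r + q) r

lemma mem_maskSet {r q : ℕ} {m : List Bool} :
    m ∈ maskSet r q ↔ m.length = r + q ∧ m.count true = r ∧ m.count false = q := by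
  simp only [maskSet, Finset.mem_filter, mem_masksF]
  constructor
  · rintro ⟨h1, h2⟩
    have := count_true_add_count_false m
    exact ⟨h1, h2, by omega⟩
  · rintro ⟨h1, h2, _⟩; exact ⟨h1, h2⟩

lemma fact_split (r q : ℕ) :
    ((r.factorial : K))⁻¹ * ((q.factorial : K))⁻¹
      = ((r + q).choose r : K) * (((r + q).factorial : K))⁻¹ := by
  have h := Nat.choose_mul_factorial_mul_factorial (Nat.le_add_right r q)
  rw [Nat.add_sub_cancel_left] at h
  have hK : (((r + q).factorial : ℕ) : K)
      = ((r + q).choose r : K) * (r.factorial : K) * (q.factorial : K) := by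
    exact_mod_cast congrArg (Nat.cast : ℕ → K) h.symm
  have h1 : ((r.factorial : K)) ≠ 0 := Nat.cast_ne_zero.mpr r.factorial_ne_zero
  have h2 : ((q.factorial : K)) ≠ 0 := Nat.cast_ne_zero.mpr q.factorial_ne_zero
  have h3 : (((r + q).factorial : K)) ≠ 0 := Nat.cast_ne_zero.mpr (r + q).factorial_ne_zero
  have h4 : ((r + q).choose r : K) ≠ 0 := by
    have := Nat.choose_pos (Nat.le_add_right r q)
    exact Nat.cast_ne_zero.mpr (by omega)
  rw [hK]
  field_simp

lemma theta_comm (x : ℕ → A) (O : ℤ → A) (c : ℕ → K)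
    (hx : ∀ n : ℕ, 1 ≤ n → ∀ j : ℤ, x n * O j = O j * x n + c n • O (j + n))
    (Θf : ℕ → A)
    (hΘf : ∀ m : ℕ, Θf m = ∑ L ∈ comps m, ((L.length.factorial : K))⁻¹ • W x L) :
    ∀ (n : ℕ) (j : ℤ), Θf n * O j
      = ∑ i ∈ Finset.range (n + 1), g c i • (O (j + (i : ℤ)) * Θf (n - i)) := by
  intro n j
  -- LHS expansion
  have lhs : Θf n * O j = ∑ L ∈ comps n, ∑ m ∈ masksF L.length,
      (((L.length.factorial : K))⁻¹ * ((picked L m).map c).prod) •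
        (O (j + ((picked L m).sum : ℤ)) * W x (rest L m)) := by
    rw [hΘf n, Finset.sum_mul]
    apply Finset.sum_congr rfl
    intro L hL
    rw [smul_mul_assoc, W_mul_O x O c hx L (fun b hb => (mem_comps.mp hL).1 b hb) j,
      Finset.smul_sum]
    apply Finset.sum_congr rfl
    intro m _
    rw [smul_smul]
  -- RHS expansion
  have rhs : ∀ i ∈ Finset.range (n + 1), g c i • (O (j + (i : ℤ)) * Θf (n - i))
      = ∑ P ∈ comps i, ∑ Q ∈ comps (n - i), ∑ m ∈ maskSet P.length Q.length,
          ((((P.length + Q.length).factorial : K))⁻¹ * (P.map c).prod) •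
            (O (j + (i : ℤ)) * W x Q) := by
    intro i _
    rw [hΘf (n - i), Finset.mul_sum, g_eq_sum, Finset.sum_smul]
    apply Finset.sum_congr rfl
    intro P hP
    rw [Finset.smul_sum]
    apply Finset.sum_congr rfl
    intro Q hQ
    rw [Finset.sum_const, card_maskSet]
    rw [mul_smul_comm, smul_smul, ← Nat.cast_smul_eq_nsmul K, smul_smul]
    congr 1
    linear_combination (List.map c P).prod * fact_split (K := K) P.length Q.length
  rw [lhs, Finset.sum_congr rfl rhs]
  -- convert to sigma sums
  rw [Finset.sum_sigma' (comps n) (fun L => masksF L.length)]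
  have conv1 : ∀ i ∈ Finset.range (n + 1),
      (∑ P ∈ comps i, ∑ Q ∈ comps (n - i), ∑ m ∈ maskSet P.length Q.length,
          ((((P.length + Q.length).factorial : K))⁻¹ * (P.map c).prod) •
            (O (j + (i : ℤ)) * W x Q))
      = ∑ p ∈ (comps i).sigma (fun P => (comps (n - i)).sigma
            (fun Q => maskSet P.length Q.length)),
          ((((p.1.length + p.2.1.length).factorial : K))⁻¹ * (p.1.map c).prod) •
            (O (j + (i : ℤ)) * W x p.2.1) := by
    intro i _
    rw [← Finset.sum_sigma' (comps i) (fun P => (comps (n - i)).sigma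
        (fun Q => maskSet P.length Q.length))
        (fun P p => ((((P.length + p.1.length).factorial : K))⁻¹ * (P.map c).prod) •
            (O (j + (i : ℤ)) * W x p.1))]
    apply Finset.sum_congr rfl
    intro P _
    rw [← Finset.sum_sigma' (comps (n - i)) (fun Q => maskSet P.length Q.length)
        (fun Q m => ((((P.length + Q.length).factorial : K))⁻¹ * (P.map c).prod) •
            (O (j + (i : ℤ)) * W x Q))]
  rw [Finset.sum_congr rfl conv1]
  rw [Finset.sum_sigma' (Finset.range (n + 1))
      (fun i => (comps i).sigma (fun P => (comps (n - i)).sigma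
        (fun Q => maskSet P.length Q.length)))
      (fun i p => ((((p.1.length + p.2.1.length).factorial : K))⁻¹ * (p.1.map c).prod) •
            (O (j + (i : ℤ)) * W x p.2.1))]
  -- the grand bijection
  refine Finset.sum_nbij'
    (fun a => ⟨(picked a.1 a.2).sum, picked a.1 a.2, rest a.1 a.2, a.2⟩)
    (fun b => ⟨interleave b.2.2.2 b.2.1 b.2.2.1, b.2.2.2⟩)
    ?_ ?_ ?_ ?_ ?_
  · -- maps into target
    rintro ⟨L, m⟩ hLm
    simp only [Finset.mem_sigma] at hLm ⊢
    obtain ⟨hL, hm⟩ := hLm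
    obtain ⟨hpos, hsum⟩ := mem_comps.mp hL
    have hlen : m.length = L.length := mem_masksF.mp hm
    have hps := picked_sum_add_rest_sum L m
    have hpl := picked_length L m hlen
    have hrl := rest_length L m hlen
    have hcc := count_true_add_count_false m
    refine ⟨?_, ?_, ?_, ?_⟩
    · simp only [Finset.mem_range]; omega
    · exact mem_comps.mpr ⟨fun b hb => hpos b (mem_picked L m b hb), rfl⟩
    · exact mem_comps.mpr ⟨fun b hb => hpos b (mem_rest L m b hb), by omega⟩
    · exact mem_maskSet.mpr ⟨by omega, by omega, by omega⟩
  · -- inverse maps into source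
    rintro ⟨i, P, Q, m⟩ hb
    simp only [Finset.mem_sigma] at hb ⊢
    obtain ⟨hi, hP, hQ, hm⟩ := hb
    simp only [Finset.mem_range] at hi
    obtain ⟨hPpos, hPsum⟩ := mem_comps.mp hP
    obtain ⟨hQpos, hQsum⟩ := mem_comps.mp hQ
    obtain ⟨hml, hmt, hmf⟩ := mem_maskSet.mp hm
    constructor
    · refine mem_comps.mpr ⟨?_, ?_⟩
      · intro b hb
        rcases mem_interleave m P Q b hb with h | h
        · exact hPpos b h
        · exact hQpos b h
      · rw [sum_interleave m P Q (by omega) (by omega)]; omega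
    · exact mem_masksF.mpr (length_interleave m P Q (by omega) (by omega)).symm
  · -- left inverse
    rintro ⟨L, m⟩ hLm
    simp only [Finset.mem_sigma] at hLm
    obtain ⟨hL, hm⟩ := hLm
    have hlen : m.length = L.length := mem_masksF.mp hm
    dsimp only
    rw [interleave_picked_rest L m hlen]
  · -- right inverse
    rintro ⟨i, P, Q, m⟩ hb
    simp only [Finset.mem_sigma] at hb
    obtain ⟨hi, hP, hQ, hm⟩ := hb
    obtain ⟨hml, hmt, hmf⟩ := mem_maskSet.mp hm
    have h1 : picked (interleave m P Q) m = P := picked_interleave m P Q hmt hmf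
    have h2 : rest (interleave m P Q) m = Q := rest_interleave m P Q hmt hmf
    dsimp only
    rw [h1, h2, (mem_comps.mp hP).2]
  · -- summands agree
    rintro ⟨L, m⟩ hLm
    simp only [Finset.mem_sigma] at hLm
    obtain ⟨hL, hm⟩ := hLm
    have hlen : m.length = L.length := mem_masksF.mp hm
    have hpl := picked_length L m hlen
    have hrl := rest_length L m hlen
    have hcc := count_true_add_count_false m
    have : (picked L m).length + (rest L m).length = L.length := by omega
    rw [this]

end Grand

end ThetaAux

noncomputable instance : CharZero (RatFunc ℚ) :=
  charZero_of_injective_algebraMap (algebraMap ℚ (RatFunc ℚ)).injective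

open scoped BigOperators

/-- coefficientwise form of the formal-series identity.
Work in an associative (possibly noncommutative) algebra A over K = ℚ(v).
Write T(s) = Σ_{i≥1} (T_i/[i]_v) s^i with [i]_v = (v^i − v^{−i})/(v − v^{−1}),
O(t) = Σ_{j∈ℤ} O_j t^j, Θ(s) = Σ_{m≥0} Θ_m s^m.  The hypothesis `hΘ` says
Θ(s) = exp(T(vs) − T(v⁻¹s)): the s^m-coefficient of exp of the series with
s^i-coefficient ((v^i − v^{−i})/[i]_v)·T_i is a sum over compositions of m.
The hypothesis `hcomm` says [T(s), O(t)] = −O(t)·log((1 − s/(vt))(1 − vs/t)),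
i.e. [T_n/[n]_v, O_j] = ((v^{−n} + v^n)/n)·O_{j+n} for all n ≥ 1, j ∈ ℤ.
The conclusion is Θ(s)·O(t) = O(t)·Θ(s)·(1 − s/(v²t))/(1 − v²s/t), written
coefficientwise using the expansion
(1 − s/(v²t))/(1 − v²s/t) = 1 + (1 − v⁻⁴) Σ_{i≥1} v^{2i} (s/t)^i. -/
theorem theta_O_commutation
    {A : Type*} [Ring A] [Algebra (RatFunc ℚ) A]
    (v : RatFunc ℚ) (hv : v = RatFunc.X)
    (Θ T : ℕ → A) (O : ℤ → A)
    (hT0 : T 0 = 0)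
    (hΘ : ∀ m : ℕ, Θ m =
      ∑ c : Composition m, ((c.length.factorial : RatFunc ℚ))⁻¹ •
        (c.blocks.map (fun i : ℕ =>
          ((v ^ i - v⁻¹ ^ i) * ((v ^ i - v⁻¹ ^ i) / (v - v⁻¹))⁻¹) • T i)).prod)
    (hcomm : ∀ n : ℕ, 1 ≤ n → ∀ j : ℤ,
      (((v ^ n - v⁻¹ ^ n) / (v - v⁻¹))⁻¹ • T n) * O j
          - O j * (((v ^ n - v⁻¹ ^ n) / (v - v⁻¹))⁻¹ • T n)
        = (((v⁻¹ ^ n + v ^ n) / (n : RatFunc ℚ))) • O (j + n)) :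
    ∀ (n : ℕ) (j : ℤ),
      Θ n * O j = ∑ i ∈ Finset.range (n + 1),
        (if i = 0 then (1 : RatFunc ℚ) else (1 - v⁻¹ ^ 4) * v ^ (2 * i)) •
          (O (j + i) * Θ (n - i)) := by
  have hv0 : v ≠ 0 := by rw [hv]; exact RatFunc.X_ne_zero
  set xf : ℕ → A := fun i : ℕ =>
    ((v ^ i - v⁻¹ ^ i) * ((v ^ i - v⁻¹ ^ i) / (v - v⁻¹))⁻¹) • T i with hxf
  set cf : ℕ → RatFunc ℚ :=
    fun b : ℕ => (v ^ (2 * b) - v⁻¹ ^ (2 * b)) / (b : RatFunc ℚ) with hcf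
  have hx : ∀ m : ℕ, 1 ≤ m → ∀ j : ℤ,
      xf m * O j = O j * xf m + cf m • O (j + m) := by
    intro m hm j
    have hy : xf m = (v ^ m - v⁻¹ ^ m) • (((v ^ m - v⁻¹ ^ m) / (v - v⁻¹))⁻¹ • T m) := by
      show ((v ^ m - v⁻¹ ^ m) * ((v ^ m - v⁻¹ ^ m) / (v - v⁻¹))⁻¹) • T m = _
      rw [mul_smul]
    have h := hcomm m hm j
    have h' : (((v ^ m - v⁻¹ ^ m) / (v - v⁻¹))⁻¹ • T m) * O j
        = O j * (((v ^ m - v⁻¹ ^ m) / (v - v⁻¹))⁻¹ • T m)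
          + ((v⁻¹ ^ m + v ^ m) / (m : RatFunc ℚ)) • O (j + m) := by
      rw [sub_eq_iff_eq_add] at h
      rw [h]
      abel
    rw [hy, smul_mul_assoc, h', smul_add, ← mul_smul_comm, ← hy, smul_smul]
    congr 2
    show (v ^ m - v⁻¹ ^ m) * ((v⁻¹ ^ m + v ^ m) / (m : RatFunc ℚ))
        = (v ^ (2 * m) - v⁻¹ ^ (2 * m)) / (m : RatFunc ℚ)
    rw [two_mul, pow_add, pow_add, ← mul_div_assoc]
    congr 1
    ring
  have hΘf : ∀ m : ℕ, Θ m
      = ∑ L ∈ ThetaAux.comps m, ((L.length.factorial : RatFunc ℚ))⁻¹ • ThetaAux.W xf L := by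
    intro m
    rw [hΘ m]
    apply Finset.sum_bij (i := fun (comp : Composition m) _ => comp.blocks)
    · intro a _
      exact ThetaAux.mem_comps.mpr ⟨fun b hb => a.blocks_pos hb, a.blocks_sum⟩
    · intro a₁ _ a₂ _ h
      exact Composition.ext h
    · intro L hL
      refine ⟨⟨L, fun hb => (ThetaAux.mem_comps.mp hL).1 _ hb, (ThetaAux.mem_comps.mp hL).2⟩,
        Finset.mem_univ _, rfl⟩
    · intro a _
      rfl
  intro n j
  rw [ThetaAux.theta_comm xf O cf hx Θ hΘf n j]
  apply Finset.sum_congr rfl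
  intro i _
  have hgc : ThetaAux.g cf i = ThetaAux.ghat v i := by
    apply ThetaAux.g_eq_ghat v hv0 cf ?_ i
    intro b hb
    have hbK : ((b : ℕ) : RatFunc ℚ) ≠ 0 := Nat.cast_ne_zero.mpr (by omega)
    rw [hcf]
    show ((b : ℕ) : RatFunc ℚ) * ((v ^ (2 * b) - v⁻¹ ^ (2 * b)) / (b : RatFunc ℚ)) = _
    field_simp
  rw [hgc]
  rfl
end

section
/- Let A be an abelian category with finite Hom- and Ext¹-sets, and let X, Y, Z be objects. Then the Hall number F^Z_{X,Y} (the number of subobjects U ⊆ Z with U ≅ Y and Z/U ≅ X) equals (|Ext¹(X,Y)_Z| / |Hom(X,Y)|) · (a_Z / (a_X a_Y)), where Ext¹(X,Y)_Z is the set of equivalence classes of short exact sequences 0 → Y → Z → X → 0 and a_M = |Aut(M)|. -/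
open CategoryTheory CategoryTheory.Limits

/-- The Hall number F^Z_{X,Y}: the number of subobjects U ⊆ Z with U ≅ Y and Z/U ≅ X. -/
noncomputable def hallNumber {C : Type*} [Category C] [Abelian C] (Z X Y : C) : ℕ :=
  Nat.card {U : Subobject Z // Nonempty ((U : C) ≅ Y) ∧ Nonempty (cokernel U.arrow ≅ X)}

/-- Short exact sequences 0 → Y → Z → X → 0 with prescribed middle term Z. -/
def SESData {C : Type*} [Category C] [Abelian C] (X Y Z : C) : Type _ :=
  {p : (Y ⟶ Z) × (Z ⟶ X) // Mono p.1 ∧ Epi p.2 ∧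
    ∃ w : p.1 ≫ p.2 = 0, (ShortComplex.mk p.1 p.2 w).Exact}

/-- Equivalence of extensions with middle term Z: an isomorphism of the middle
terms commuting with the identity maps on Y and X. -/
def sesEquiv {C : Type*} [Category C] [Abelian C] (X Y Z : C) :
    SESData X Y Z → SESData X Y Z → Prop :=
  fun a b => ∃ φ : Z ≅ Z, a.1.1 ≫ φ.hom = b.1.1 ∧ φ.hom ≫ b.1.2 = a.1.2

/-- |Ext¹(X,Y)_Z|: the number of equivalence classes of short exact sequences
0 → Y → Z → X → 0. -/
noncomputable def extClassCount {C : Type*} [Category C] [Abelian C] (X Y Z : C) : ℕ :=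
  Nat.card (Quot (sesEquiv X Y Z))

/-! ### Auxiliary material for the proof -/

section Counting

/-- If `f : W → Q` is surjective with all fibers of "weighted size" `m` (i.e.
`|fiber| * k = m`), then `|W| * k = |Q| * m`. -/
lemma RP.card_fiber_mul {W Q : Type*} [Finite W] (f : W → Q) (hf : Function.Surjective f)
    (k m : ℕ) (h : ∀ q : Q, Nat.card {w // f w = q} * k = m) :
    Nat.card W * k = Nat.card Q * m := by
  classical
  have : Finite Q := Finite.of_surjective f hf
  cases nonempty_fintype Q
  cases nonempty_fintype W
  rw [Nat.card_eq_fintype_card, Nat.card_eq_fintype_card,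
    ← Fintype.card_congr (Equiv.sigmaFiberEquiv f), Fintype.card_sigma, Finset.sum_mul]
  have h' : ∀ q : Q, Fintype.card {w // f w = q} * k = m := by
    intro q
    rw [← Nat.card_eq_fintype_card]
    exact h q
  calc ∑ q : Q, Fintype.card {w // f w = q} * k = ∑ _q : Q, m := by
        exact Finset.sum_congr rfl fun q _ => h' q
    _ = Fintype.card Q * m := by rw [Finset.sum_const, smul_eq_mul, Fintype.card]

end Counting

namespace RP

variable {C : Type*} [Category C] [Abelian C]

lemma finite_iso [∀ A B : C, Finite (A ⟶ B)] (A B : C) : Finite (A ≅ B) :=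
  Finite.of_injective (fun φ => (φ.hom, φ.inv))
    (fun φ ψ h => Iso.ext (congrArg Prod.fst h))

variable (X Y Z : C)

lemma finite_ses [∀ A B : C, Finite (A ⟶ B)] : Finite (SESData X Y Z) := by
  unfold SESData; infer_instance

/-- Transfer exactness along twisting by isomorphisms on the two ends. -/
lemma exact_twist {Y' X' : C} (i : Y' ⟶ Z) (p : Z ⟶ X') (hz : i ≫ p = 0)
    (hex : (ShortComplex.mk i p hz).Exact) (b : Y ≅ Y') (a : X' ≅ X)
    (hz2 : (b.hom ≫ i) ≫ p ≫ a.hom = 0) :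
    (ShortComplex.mk (b.hom ≫ i) (p ≫ a.hom) hz2).Exact := by
  refine ShortComplex.exact_of_iso (ShortComplex.isoMk b.symm (Iso.refl Z) a ?_ ?_) hex
  · simp
  · simp

lemma sesEquiv_equivalence : Equivalence (sesEquiv X Y Z) := by
  constructor
  · intro a
    exact ⟨Iso.refl Z, by simp, by simp⟩
  · rintro a b ⟨φ, h1, h2⟩
    refine ⟨φ.symm, ?_, ?_⟩
    · rw [← h1]; simp
    · rw [← h2]; simp
  · rintro a b c ⟨φ, h1, h2⟩ ⟨ψ, h3, h4⟩
    refine ⟨φ ≪≫ ψ, ?_, ?_⟩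
    · simp [← h3, ← h1]
    · simp [h4, h2]

end RP

section Main

variable {C : Type*} [Category C] [Abelian C] [∀ A B : C, Finite (A ⟶ B)] (X Y Z : C)

open RP

attribute [local instance] RP.finite_iso RP.finite_ses

/-- The map sending a short exact sequence to its image subobject. -/
noncomputable def RP.toH (w : SESData X Y Z) :
    {U : Subobject Z // Nonempty ((U : C) ≅ Y) ∧ Nonempty (cokernel U.arrow ≅ X)} :=
  haveI : Mono w.1.1 := w.2.1
  haveI : Epi (ShortComplex.mk w.1.1 w.1.2 w.2.2.2.choose).g := w.2.2.1
  ⟨Subobject.mk w.1.1, ⟨Subobject.underlyingIso w.1.1⟩,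
   ⟨(cokernelIsoOfEq (Subobject.underlyingIso_hom_comp_eq_mk w.1.1)).symm ≪≫
     cokernelEpiComp (Subobject.underlyingIso w.1.1).hom w.1.1 ≪≫
     IsColimit.coconePointUniqueUpToIso (cokernelIsCokernel w.1.1)
       w.2.2.2.choose_spec.gIsCokernel⟩⟩

/-- Step A: counting `SESData` by fibering over subobjects. -/
lemma RP.stepA :
    Nat.card (SESData X Y Z) * 1 =
      hallNumber Z X Y * (Nat.card (Y ≅ Y) * Nat.card (X ≅ X)) := by
  classical
  rw [show hallNumber Z X Y = Nat.card
      {U : Subobject Z // Nonempty ((U : C) ≅ Y) ∧ Nonempty (cokernel U.arrow ≅ X)} from rfl]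
  refine RP.card_fiber_mul (RP.toH X Y Z) ?_ 1 _ ?_
  · -- surjectivity
    rintro ⟨U, ⟨u⟩, ⟨c⟩⟩
    haveI : Mono (u.inv ≫ U.arrow) := mono_comp _ _
    have hz0 : (u.inv ≫ U.arrow) ≫ cokernel.π U.arrow ≫ c.hom = 0 := by
      simp
    have hex0 : (ShortComplex.mk (u.inv ≫ U.arrow) (cokernel.π U.arrow ≫ c.hom) hz0).Exact := by
      have hbase : (ShortComplex.mk U.arrow (cokernel.π U.arrow) (cokernel.condition _)).Exact :=
        ShortComplex.exact_of_g_is_cokernel _ (cokernelIsCokernel _)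
      exact RP.exact_twist X Y Z _ _ _ hbase u.symm c hz0
    refine ⟨⟨(u.inv ≫ U.arrow, cokernel.π U.arrow ≫ c.hom), ⟨inferInstance, epi_comp _ _,
      hz0, hex0⟩⟩, ?_⟩
    apply Subtype.ext
    show Subobject.mk (u.inv ≫ U.arrow) = U
    rw [Subobject.mk_eq_mk_of_comm (u.inv ≫ U.arrow) U.arrow u.symm (by simp),
      Subobject.mk_arrow]
  · -- fibers
    rintro ⟨U, ⟨u⟩, ⟨c⟩⟩
    rw [mul_one, ← Nat.card_prod (Y ≅ Y) (X ≅ X)]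
    symm
    apply Nat.card_congr
    -- base short exact sequence attached to the subobject U
    haveI : Mono (u.inv ≫ U.arrow) := mono_comp _ _
    set i₀ : Y ⟶ Z := u.inv ≫ U.arrow with hi₀
    set p₀ : Z ⟶ X := cokernel.π U.arrow ≫ c.hom with hp₀
    haveI hm0 : Mono i₀ := mono_comp _ _
    haveI he0 : Epi p₀ := epi_comp _ _
    have hz0 : i₀ ≫ p₀ = 0 := by simp [hi₀, hp₀]
    have hex0 : (ShortComplex.mk i₀ p₀ hz0).Exact := by
      have hbase : (ShortComplex.mk U.arrow (cokernel.π U.arrow) (cokernel.condition _)).Exact :=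
        ShortComplex.exact_of_g_is_cokernel _ (cokernelIsCokernel _)
      exact RP.exact_twist X Y Z _ _ _ hbase u.symm c hz0
    have hU0 : Subobject.mk i₀ = U := by
      rw [Subobject.mk_eq_mk_of_comm i₀ U.arrow u.symm (by simp [hi₀]), Subobject.mk_arrow]
    refine Equiv.ofBijective (fun ba => ?_) ⟨?_, ?_⟩
    · -- the map (b, a) ↦ (b.hom ≫ i₀, p₀ ≫ a.hom)
      refine ⟨⟨(ba.1.hom ≫ i₀, p₀ ≫ ba.2.hom), ⟨mono_comp _ _, epi_comp _ _,
        (by simp [reassoc_of% hz0]), ?_⟩⟩, ?_⟩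
      · exact RP.exact_twist X Y Z i₀ p₀ hz0 hex0 ba.1 ba.2 _
      · apply Subtype.ext
        show Subobject.mk (ba.1.hom ≫ i₀) = U
        rw [Subobject.mk_eq_mk_of_comm (ba.1.hom ≫ i₀) i₀ ba.1 rfl, hU0]
    · -- injectivity
      rintro ⟨b, a⟩ ⟨b', a'⟩ h
      have h1 := congrArg (fun w => w.1.1.1) h
      have h2 := congrArg (fun w => w.1.1.2) h
      simp only at h1 h2
      have hb : b = b' := Iso.ext ((cancel_mono i₀).1 h1)
      have ha : a = a' := Iso.ext ((cancel_epi p₀).1 h2)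
      rw [hb, ha]
    · -- surjectivity
      rintro ⟨⟨⟨i, p⟩, hm, he, hz, hex⟩, hw⟩
      haveI : Mono i := hm
      haveI : Epi p := he
      have hmk : Subobject.mk i = U := congrArg Subtype.val hw
      have hmk2 : Subobject.mk i = Subobject.mk i₀ := by rw [hmk, hU0]
      set b : Y ≅ Y := Subobject.isoOfMkEqMk i i₀ hmk2 with hb
      have hbi : b.hom ≫ i₀ = i := Subobject.ofMkLEMk_comp hmk2.le
      have hip0 : i₀ ≫ p = 0 := by
        have h' : (b.hom ≫ i₀) ≫ p = 0 := by rw [hbi]; exact hz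
        rw [← cancel_epi b.hom, comp_zero, ← Category.assoc, h']
      have hip0' : i ≫ p₀ = 0 := by
        rw [← hbi, Category.assoc, hz0, comp_zero]
      -- a : X ≅ X comparing the two cokernels
      obtain ⟨hzex, hexx⟩ : ∃ w : i ≫ p = 0, (ShortComplex.mk i p w).Exact := ⟨hz, hex⟩
      have ahom : X ⟶ X := hex0.desc p hip0
      have hahom : p₀ ≫ hex0.desc p hip0 = p := hex0.g_desc p hip0
      have hainv : p ≫ hexx.desc p₀ hip0' = p₀ := hexx.g_desc p₀ hip0'
      have hai : hex0.desc p hip0 ≫ hexx.desc p₀ hip0' = 𝟙 X := by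
        rw [← cancel_epi p₀, ← Category.assoc, hahom, hainv, Category.comp_id]
      have hia : hexx.desc p₀ hip0' ≫ hex0.desc p hip0 = 𝟙 X := by
        rw [← cancel_epi p, ← Category.assoc, hainv, hahom, Category.comp_id]
      refine ⟨⟨b, ⟨hex0.desc p hip0, hexx.desc p₀ hip0', hai, hia⟩⟩, ?_⟩
      apply Subtype.ext
      apply Subtype.ext
      show (b.hom ≫ i₀, p₀ ≫ hex0.desc p hip0) = (i, p)
      rw [hbi, hahom]

/-- Middle-twist of an exact sequence by an automorphism of `Z`. -/
lemma RP.exact_twist_mid {Y' X' : C} (i : Y' ⟶ Z) (p : Z ⟶ X') (hz : i ≫ p = 0)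
    (hex : (ShortComplex.mk i p hz).Exact) (φ : Z ≅ Z)
    (hz2 : (i ≫ φ.hom) ≫ φ.inv ≫ p = 0) :
    (ShortComplex.mk (i ≫ φ.hom) (φ.inv ≫ p) hz2).Exact := by
  refine ShortComplex.exact_of_iso (ShortComplex.isoMk (Iso.refl Y') φ (Iso.refl X') ?_ ?_) hex
  · simp
  · simp

/-- Step B: counting `SESData` by fibering over ext classes. -/
lemma RP.stepB :
    Nat.card (SESData X Y Z) * Nat.card (X ⟶ Y) =
      extClassCount X Y Z * Nat.card (Z ≅ Z) := by
  classical
  rw [show extClassCount X Y Z = Nat.card (Quot (sesEquiv X Y Z)) from rfl]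
  refine RP.card_fiber_mul (Quot.mk (sesEquiv X Y Z)) Quot.exists_rep _ _ ?_
  intro q
  obtain ⟨w₀, rfl⟩ := Quot.exists_rep q
  obtain ⟨⟨i₀, p₀⟩, hm, he, hz, hex⟩ := w₀
  haveI : Mono i₀ := hm
  haveI : Epi p₀ := he
  haveI : Epi (ShortComplex.mk i₀ p₀ hz).g := he
  haveI : Mono (ShortComplex.mk i₀ p₀ hz).f := hm
  set w₀ : SESData X Y Z := ⟨(i₀, p₀), hm, he, hz, hex⟩ with hw₀
  -- The surjection from automorphisms of `Z` onto the fiber.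
  have hzF : ∀ φ : Z ≅ Z, (i₀ ≫ φ.hom) ≫ φ.inv ≫ p₀ = 0 := by
    intro φ; simpa using hz
  set F : (Z ≅ Z) → {w : SESData X Y Z // Quot.mk (sesEquiv X Y Z) w =
      Quot.mk (sesEquiv X Y Z) w₀} := fun φ =>
    ⟨⟨(i₀ ≫ φ.hom, φ.inv ≫ p₀), mono_comp _ _, epi_comp _ _, hzF φ,
        RP.exact_twist_mid Z i₀ p₀ hz hex φ (hzF φ)⟩,
      (Quot.sound ⟨φ, rfl, by simp [hw₀]⟩).symm⟩ with hF
  have hsurj : Function.Surjective F := by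
    rintro ⟨⟨⟨i, p⟩, hm', he', hz', hex'⟩, hq⟩
    have hr : sesEquiv X Y Z w₀ ⟨(i, p), hm', he', hz', hex'⟩ :=
      ((RP.sesEquiv_equivalence X Y Z).eqvGen_iff).1 (Quot.eqvGen_exact hq.symm)
    obtain ⟨φ, h1, h2⟩ := hr
    refine ⟨φ, ?_⟩
    apply Subtype.ext
    apply Subtype.ext
    show (i₀ ≫ φ.hom, φ.inv ≫ p₀) = (i, p)
    have h2' : φ.inv ≫ p₀ = p := by
      rw [← show φ.hom ≫ p = p₀ from h2]; simp
    rw [show i₀ ≫ φ.hom = i from h1, h2']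
  -- every fiber of `F` is in bijection with `X ⟶ Y`
  have hkey : Nat.card (Z ≅ Z) * 1 =
      Nat.card {w : SESData X Y Z // Quot.mk (sesEquiv X Y Z) w =
        Quot.mk (sesEquiv X Y Z) w₀} * Nat.card (X ⟶ Y) := by
    refine RP.card_fiber_mul F hsurj 1 _ ?_
    intro q'
    obtain ⟨ψ, rfl⟩ := hsurj q'
    rw [mul_one]
    symm
    apply Nat.card_congr
    have hu : ∀ h : X ⟶ Y, (p₀ ≫ h ≫ i₀) ≫ p₀ ≫ h ≫ i₀ = 0 := by
      intro h
      simp [reassoc_of% hz]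
    have hθ : ∀ h : X ⟶ Y,
        (𝟙 Z + p₀ ≫ h ≫ i₀) ≫ (𝟙 Z - p₀ ≫ h ≫ i₀) = 𝟙 Z := by
      intro h
      simp only [Preadditive.add_comp, Preadditive.comp_sub, Category.id_comp,
        Category.comp_id, hu h, sub_zero]
      abel
    have hθ' : ∀ h : X ⟶ Y,
        (𝟙 Z - p₀ ≫ h ≫ i₀) ≫ (𝟙 Z + p₀ ≫ h ≫ i₀) = 𝟙 Z := by
      intro h
      simp only [Preadditive.sub_comp, Preadditive.comp_add, Category.id_comp,
        Category.comp_id, hu h, sub_zero]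
      abel
    set θ : (X ⟶ Y) → (Z ≅ Z) := fun h =>
      ⟨𝟙 Z + p₀ ≫ h ≫ i₀, 𝟙 Z - p₀ ≫ h ≫ i₀, hθ h, hθ' h⟩ with hθdef
    have hiθ : ∀ h : X ⟶ Y, i₀ ≫ (θ h).hom = i₀ := by
      intro h
      simp [hθdef, Preadditive.comp_add, reassoc_of% hz]
    have hθp : ∀ h : X ⟶ Y, (θ h).inv ≫ p₀ = p₀ := by
      intro h
      simp [hθdef, Preadditive.sub_comp, Category.assoc, hz]
    refine Equiv.ofBijective (fun h => ⟨θ h ≪≫ ψ, ?_⟩) ⟨?_, ?_⟩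
    · -- F (θ h ≪≫ ψ) = F ψ
      apply Subtype.ext
      apply Subtype.ext
      show (i₀ ≫ (θ h ≪≫ ψ).hom, (θ h ≪≫ ψ).inv ≫ p₀) = (i₀ ≫ ψ.hom, ψ.inv ≫ p₀)
      rw [Iso.trans_hom, Iso.trans_inv, ← Category.assoc i₀, hiθ h,
        Category.assoc, hθp h]
    · -- injectivity
      intro h h' hhh
      have h1 : (θ h ≪≫ ψ).hom = (θ h' ≪≫ ψ).hom :=
        congrArg (fun s => s.val.hom) hhh
      simp only [Iso.trans_hom] at h1
      have h2 : (θ h).hom = (θ h').hom := by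
        rwa [cancel_mono ψ.hom] at h1
      simp only [hθdef] at h2
      have h3 : p₀ ≫ h ≫ i₀ = p₀ ≫ h' ≫ i₀ := by
        exact add_left_cancel h2
      rw [cancel_epi p₀] at h3
      rw [cancel_mono i₀] at h3
      exact h3
    · -- surjectivity
      rintro ⟨φ, hφ⟩
      have h1 : i₀ ≫ φ.hom = i₀ ≫ ψ.hom := by
        have := congrArg (fun w => w.1.1.1) hφ
        simpa [hF] using this
      have h2 : φ.inv ≫ p₀ = ψ.inv ≫ p₀ := by
        have := congrArg (fun w => w.1.1.2) hφ
        simpa [hF] using this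
      have hδ1 : i₀ ≫ (φ.hom ≫ ψ.inv - 𝟙 Z) = 0 := by
        rw [Preadditive.comp_sub, Category.comp_id, ← Category.assoc, h1,
          Category.assoc, Iso.hom_inv_id, Category.comp_id, sub_self]
      have hδ2 : (φ.hom ≫ ψ.inv - 𝟙 Z) ≫ p₀ = 0 := by
        rw [Preadditive.sub_comp, Category.id_comp, Category.assoc, ← h2,
          Iso.hom_inv_id_assoc, sub_self]
      set g : X ⟶ Z := hex.desc (φ.hom ≫ ψ.inv - 𝟙 Z) hδ1 with hgdef
      have hg : p₀ ≫ g = φ.hom ≫ ψ.inv - 𝟙 Z := hex.g_desc _ hδ1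
      have hgp : g ≫ p₀ = 0 := by
        rw [← cancel_epi p₀, ← Category.assoc, hg, hδ2, comp_zero]
      set h : X ⟶ Y := hex.lift g hgp with hhdef
      have hh : h ≫ i₀ = g := hex.lift_f g hgp
      refine ⟨h, ?_⟩
      apply Subtype.ext
      apply Iso.ext
      show (θ h).hom ≫ ψ.hom = φ.hom
      have : (θ h).hom = φ.hom ≫ ψ.inv := by
        show 𝟙 Z + p₀ ≫ h ≫ i₀ = φ.hom ≫ ψ.inv
        rw [hh, hg]
        abel
      rw [this, Category.assoc, Iso.inv_hom_id, Category.comp_id]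
  rw [mul_one] at hkey
  rw [← hkey]

end Main

/-- Riedtmann–Peng formula: in an abelian category with finite Hom-sets
(hence finite Ext¹-sets), F^Z_{X,Y} = (|Ext¹(X,Y)_Z| / |Hom(X,Y)|) · (a_Z/(a_X·a_Y)),
where a_M = |Aut M|. -/
theorem riedtmann_peng_formula {C : Type*} [Category C] [Abelian C]
    [∀ A B : C, Finite (A ⟶ B)] (X Y Z : C) :
    (hallNumber Z X Y : ℚ) =
      ((extClassCount X Y Z : ℚ) / (Nat.card (X ⟶ Y) : ℚ)) *
        ((Nat.card (Aut Z) : ℚ) / ((Nat.card (Aut X) : ℚ) * (Nat.card (Aut Y) : ℚ))) := by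
  haveI := RP.finite_iso (C := C)
  have hAX : Nat.card (Aut X) = Nat.card (X ≅ X) := rfl
  have hAY : Nat.card (Aut Y) = Nat.card (Y ≅ Y) := rfl
  have hAZ : Nat.card (Aut Z) = Nat.card (Z ≅ Z) := rfl
  rw [hAX, hAY, hAZ]
  have hA := RP.stepA X Y Z
  have hB := RP.stepB X Y Z
  rw [mul_one] at hA
  have hhom : (0:ℚ) < (Nat.card (X ⟶ Y) : ℚ) := by
    exact_mod_cast Nat.card_pos (α := X ⟶ Y)
  have hX : (0:ℚ) < (Nat.card (X ≅ X) : ℚ) := by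
    haveI : Nonempty (X ≅ X) := ⟨Iso.refl X⟩
    exact_mod_cast Nat.card_pos (α := X ≅ X)
  have hY : (0:ℚ) < (Nat.card (Y ≅ Y) : ℚ) := by
    haveI : Nonempty (Y ≅ Y) := ⟨Iso.refl Y⟩
    exact_mod_cast Nat.card_pos (α := Y ≅ Y)
  have hA' : (Nat.card (SESData X Y Z) : ℚ) =
      (hallNumber Z X Y : ℚ) * ((Nat.card (Y ≅ Y) : ℚ) * (Nat.card (X ≅ X) : ℚ)) := by
    exact_mod_cast congrArg (Nat.cast (R := ℚ)) hA
  have hB' : (Nat.card (SESData X Y Z) : ℚ) * (Nat.card (X ⟶ Y) : ℚ) =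
      (extClassCount X Y Z : ℚ) * (Nat.card (Z ≅ Z) : ℚ) := by
    exact_mod_cast congrArg (Nat.cast (R := ℚ)) hB
  field_simp
  linear_combination hB' - (Nat.card (X ⟶ Y) : ℚ) * hA'
end

section
/- Let Z = Z_t ⊕ Z_f be a coherent sheaf on a weighted projective line over a finite field, with Z_t torsion and Z_f a vector bundle, and let M, N be coherent sheaves. For sheaves A (arbitrary) and B_t torsion, one has F^M_{A, B_t} = δ_{A_f, M_f} · F^{M_t}_{A_t, B_t}, where A = A_f ⊕ A_t and M = M_f ⊕ M_t are the decompositions into vector-bundle and torsion parts. -/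
open CategoryTheory CategoryTheory.Limits

attribute [local instance] Classical.propDecidable

section Aux

variable {C : Type*} [Category C] [Abelian C]

/-- The cofork `biprod.map (𝟙 X) (cokernel.π f)` is a cokernel of `f ≫ biprod.inr`. -/
noncomputable def cokernelCompInrIsColimit {V X Y : C} (f : V ⟶ Y) :
    IsColimit (CokernelCofork.ofπ (f := f ≫ (biprod.inr : Y ⟶ X ⊞ Y))
      (biprod.map (𝟙 X) (cokernel.π f)) (by simp)) :=
  CokernelCofork.IsColimit.ofπ _ _
    (fun {Z'} g' w => biprod.desc (biprod.inl ≫ g')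
      (cokernel.desc f (biprod.inr ≫ g') (by simpa using w)))
    (fun {Z'} g' w => by apply biprod.hom_ext' <;> simp)
    (fun {Z'} g' w m hm => by
      apply biprod.hom_ext'
      · have h := congrArg (fun t => biprod.inl ≫ t) hm
        simpa using h
      · rw [← cancel_epi (cokernel.π f)]
        have h := congrArg (fun t => biprod.inr ≫ t) hm
        simp only [biprod.inr_map_assoc] at h
        simpa using h)

/-- `cokernel (f ≫ biprod.inr) ≅ X ⊞ cokernel f`. -/
noncomputable def cokernelCompInrIso {V X Y : C} (f : V ⟶ Y) :
    cokernel (f ≫ (biprod.inr : Y ⟶ X ⊞ Y)) ≅ X ⊞ cokernel f :=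
  colimit.isoColimitCocone ⟨_, cokernelCompInrIsColimit f⟩

/-- Cokernel of the canonical arrow of `Subobject.mk f` is the cokernel of `f`. -/
noncomputable def cokernelMkIso {A B : C} (f : A ⟶ B) [Mono f] :
    cokernel (Subobject.mk f).arrow ≅ cokernel f :=
  (cokernelEpiComp (Subobject.underlyingIso f).inv (Subobject.mk f).arrow).symm ≪≫
    cokernelIsoOfEq (Subobject.underlyingIso_arrow f)

/-- Splitting helper: if the composite `i ≫ f ≫ g ≫ p` is the identity and the
cross term through the second summand vanishes, the first-summand components
compose to the identity. -/
theorem split_piece_fst {P A X Y : C} (f : P ⟶ X ⊞ Y) (g : X ⊞ Y ⟶ P)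
    (i : A ⟶ P) (p : P ⟶ A) (hip : i ≫ f ≫ g ≫ p = 𝟙 A)
    (hz : i ≫ f ≫ biprod.snd ≫ biprod.inr ≫ g ≫ p = 0) :
    (i ≫ f ≫ biprod.fst) ≫ (biprod.inl ≫ g ≫ p) = 𝟙 A := by
  have tot := biprod.total (X := X) (Y := Y)
  have h : i ≫ f ≫ (biprod.fst ≫ biprod.inl + biprod.snd ≫ biprod.inr) ≫ g ≫ p = 𝟙 A := by
    rw [tot]; simpa using hip
  simp only [Preadditive.add_comp, Preadditive.comp_add, Category.assoc] at h
  rw [hz, add_zero] at h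
  simpa using h

/-- Splitting helper, second-summand version. -/
theorem split_piece_snd {P A X Y : C} (f : P ⟶ X ⊞ Y) (g : X ⊞ Y ⟶ P)
    (i : A ⟶ P) (p : P ⟶ A) (hip : i ≫ f ≫ g ≫ p = 𝟙 A)
    (hz : i ≫ f ≫ biprod.fst ≫ biprod.inl ≫ g ≫ p = 0) :
    (i ≫ f ≫ biprod.snd) ≫ (biprod.inr ≫ g ≫ p) = 𝟙 A := by
  have tot := biprod.total (X := X) (Y := Y)
  have h : i ≫ f ≫ (biprod.fst ≫ biprod.inl + biprod.snd ≫ biprod.inr) ≫ g ≫ p = 𝟙 A := by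
    rw [tot]; simpa using hip
  simp only [Preadditive.add_comp, Preadditive.comp_add, Category.assoc] at h
  rw [hz, zero_add] at h
  simpa using h

/-- A matrix argument: an isomorphism of biproducts with vanishing off-diagonal
corner entries splits into isomorphisms of the summands. -/
theorem iso_components {Af At Mf Q : C} (φ : Af ⊞ At ≅ Mf ⊞ Q)
    (h1 : (biprod.inr ≫ φ.hom ≫ biprod.fst : At ⟶ Mf) = 0)
    (h2 : (biprod.inr ≫ φ.inv ≫ biprod.fst : Q ⟶ Af) = 0) :
    Nonempty (Af ≅ Mf) ∧ Nonempty (At ≅ Q) := by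
  constructor
  · refine ⟨⟨biprod.inl ≫ φ.hom ≫ biprod.fst, biprod.inl ≫ φ.inv ≫ biprod.fst, ?_, ?_⟩⟩
    · have := split_piece_fst (f := φ.hom) (g := φ.inv) (i := (biprod.inl : Af ⟶ Af ⊞ At))
        (p := (biprod.fst : Af ⊞ At ⟶ Af)) (by simp) (by simp [h2])
      simpa using this
    · have := split_piece_fst (f := φ.inv) (g := φ.hom) (i := (biprod.inl : Mf ⟶ Mf ⊞ Q))
        (p := (biprod.fst : Mf ⊞ Q ⟶ Mf)) (by simp) (by simp [h1])
      simpa using this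
  · refine ⟨⟨biprod.inr ≫ φ.hom ≫ biprod.snd, biprod.inr ≫ φ.inv ≫ biprod.snd, ?_, ?_⟩⟩
    · have := split_piece_snd (f := φ.hom) (g := φ.inv) (i := (biprod.inr : At ⟶ Af ⊞ At))
        (p := (biprod.snd : Af ⊞ At ⟶ At)) (by simp) (by simp [reassoc_of% h1])
      simpa using this
    · have := split_piece_snd (f := φ.inv) (g := φ.hom) (i := (biprod.inr : Q ⟶ Mf ⊞ Q))
        (p := (biprod.snd : Mf ⊞ Q ⟶ Q)) (by simp) (by simp [reassoc_of% h2])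
      simpa using this

end Aux

/-- for a splitting torsion pair (Tor, Free) — Hom(torsion, free) = 0,
Ext¹(free, torsion) = 0, torsion closed under subobjects and quotients, free closed
under subobjects — and sheaves M = M_f ⊕ M_t, A = A_f ⊕ A_t (vector-bundle and
torsion parts) and B_t torsion, one has
F^M_{A,B_t} = δ_{A_f,M_f} · F^{M_t}_{A_t,B_t}. -/
theorem hall_number_torsion_pair_reduction
    {C : Type*} [Category C] [Abelian C] [∀ A B : C, Finite (A ⟶ B)]
    (Tor Free : C → Prop)
    (hTF : ∀ (A B : C), Tor A → Free B → ∀ f : A ⟶ B, f = 0)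
    (hExtFT : ∀ (A B Z : C), Free A → Tor B →
      ∀ (f : B ⟶ Z) (g : Z ⟶ A) (w : f ≫ g = 0),
        (ShortComplex.mk f g w).Exact → Mono f → Epi g → ∃ s : A ⟶ Z, s ≫ g = 𝟙 A)
    (hTorSub : ∀ (A B : C) (f : A ⟶ B), Mono f → Tor B → Tor A)
    (hTorQuot : ∀ (A B : C) (f : A ⟶ B), Epi f → Tor A → Tor B)
    (hFreeSub : ∀ (A B : C) (f : A ⟶ B), Mono f → Free B → Free A)
    (Mf Mt Af At Bt : C)
    (hMf : Free Mf) (hMt : Tor Mt) (hAf : Free Af) (hAt : Tor At) (hBt : Tor Bt) :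
    hallNumber (Mf ⊞ Mt) (Af ⊞ At) Bt =
      (if Nonempty (Af ≅ Mf) then 1 else 0) * hallNumber Mt At Bt := by
  classical
  -- Step 1: any subobject of Mf ⊞ Mt isomorphic to Bt factors through Mt.
  have key : ∀ U : Subobject (Mf ⊞ Mt), Nonempty ((U : C) ≅ Bt) →
      Mono (U.arrow ≫ biprod.snd) ∧ (U.arrow ≫ biprod.snd) ≫ biprod.inr = U.arrow := by
    rintro U ⟨e⟩
    have hTorU : Tor (U : C) := hTorSub _ _ e.hom inferInstance hBt
    have hz : U.arrow ≫ biprod.fst = 0 := hTF _ _ hTorU hMf _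
    have hfac : (U.arrow ≫ biprod.snd) ≫ biprod.inr = U.arrow := by
      have h := biprod.total (X := Mf) (Y := Mt)
      conv_rhs => rw [← Category.comp_id U.arrow, ← h]
      simp only [Preadditive.comp_add, Category.assoc, reassoc_of% hz, zero_comp, zero_add]
    refine ⟨?_, hfac⟩
    haveI : Mono ((U.arrow ≫ biprod.snd) ≫ biprod.inr) := by rw [hfac]; infer_instance
    exact mono_of_mono (U.arrow ≫ biprod.snd) (biprod.inr : Mt ⟶ Mf ⊞ Mt)
  -- Step 2: analysis of the cokernel.
  have key2 : ∀ U : Subobject (Mf ⊞ Mt), Nonempty ((U : C) ≅ Bt) →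
      Nonempty (cokernel U.arrow ≅ Af ⊞ At) →
      Nonempty (Af ≅ Mf) ∧ Nonempty (At ≅ cokernel (U.arrow ≫ biprod.snd)) := by
    intro U hB hC
    obtain ⟨hm, hfac⟩ := key U hB
    obtain ⟨c⟩ := hC
    haveI := hm
    have hcok : cokernel U.arrow ≅ Mf ⊞ cokernel (U.arrow ≫ biprod.snd) :=
      cokernelIsoOfEq hfac.symm ≪≫ cokernelCompInrIso _
    have hTorQ : Tor (cokernel (U.arrow ≫ biprod.snd)) :=
      hTorQuot _ _ (cokernel.π _) inferInstance hMt
    exact iso_components (c.symm ≪≫ hcok) (hTF _ _ hAt hMf _) (hTF _ _ hTorQ hAf _)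
  by_cases hiso : Nonempty (Af ≅ Mf)
  · rw [if_pos hiso, one_mul]
    obtain ⟨e⟩ := hiso
    refine Nat.card_congr ?_
    refine
      { toFun := fun p =>
          ⟨@Subobject.mk _ _ _ _ (p.1.arrow ≫ biprod.snd) (key p.1 p.2.1).1,
            ⟨(@Subobject.underlyingIso _ _ _ _ _ (key p.1 p.2.1).1) ≪≫ p.2.1.some⟩,
            ⟨(@cokernelMkIso _ _ _ _ _ _ (key p.1 p.2.1).1) ≪≫
              (key2 p.1 p.2.1 p.2.2).2.some.symm⟩⟩
        invFun := fun q =>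
          ⟨Subobject.mk (q.1.arrow ≫ biprod.inr),
            ⟨Subobject.underlyingIso _ ≪≫ q.2.1.some⟩,
            ⟨cokernelMkIso _ ≪≫ cokernelCompInrIso _ ≪≫
              biprod.mapIso e.symm q.2.2.some⟩⟩
        left_inv := ?_
        right_inv := ?_ }
    · intro p
      refine Subtype.ext ?_
      dsimp only
      obtain ⟨hm, hfac⟩ := key p.1 p.2.1
      haveI := hm
      have h1 : Subobject.mk ((Subobject.mk (p.1.arrow ≫ biprod.snd)).arrow ≫ biprod.inr)
          = Subobject.mk p.1.arrow := by
        refine Subobject.mk_eq_mk_of_comm _ _ (Subobject.underlyingIso _) ?_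
        have hfac' : p.1.arrow ≫ biprod.snd ≫ biprod.inr = p.1.arrow := by
          rw [← Category.assoc]; exact hfac
        conv_rhs => rw [← Subobject.underlyingIso_hom_comp_eq_mk (p.1.arrow ≫ biprod.snd)]
        simp only [Category.assoc, hfac']
      rw [h1, Subobject.mk_arrow]
    · intro q
      refine Subtype.ext ?_
      dsimp only
      haveI : Mono ((Subobject.mk (q.1.arrow ≫ biprod.inr)).arrow ≫ biprod.snd) :=
        (key _ ⟨Subobject.underlyingIso _ ≪≫ q.2.1.some⟩).1
      refine Subobject.mk_eq_of_comm _ (Subobject.underlyingIso _) ?_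
      conv_rhs => rw [← Subobject.underlyingIso_hom_comp_eq_mk (q.1.arrow ≫ biprod.inr)]
      simp only [Category.assoc, biprod.inr_snd, Category.comp_id]
  · rw [if_neg hiso, zero_mul]
    have : IsEmpty {U : Subobject (Mf ⊞ Mt) //
        Nonempty ((U : C) ≅ Bt) ∧ Nonempty (cokernel U.arrow ≅ Af ⊞ At)} :=
      ⟨fun p => hiso (key2 p.1 p.2.1 p.2.2).1⟩
    exact Nat.card_of_isEmpty
end
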